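/- arXiv:1002.4920 — 6 statements merged into one kernel-verified Lean document; each statement's English description precedes it below -/
import Mathlib

section
/- Let H be a complex Hilbert space, let M be a von Neumann algebra acting on H, and let (φ_t)_{t ≥ 0} be a family of linear maps φ_t : M → M such that: φ_0 = id; φ_{s+t} = φ_s ∘ φ_t for all s, t ≥ 0; ‖φ_t(a)‖ ≤ ‖a‖ for all a ∈ M and t ≥ 0; each φ_t satisfies the Schwarz inequality φ_t(a)* φ_t(a) ≤ φ_t(a* a) (Loewner order on B(H)) for all a ∈ M; and for every a ∈ M and ξ, η ∈ H the function t ↦ ⟨φ_t(a)ξ, η⟩ is continuous on [0, ∞). Then for every a ∈ M and every ξ ∈ H the map t ↦ φ_t(a)ξ is right-continuous in norm, i.e. ‖φ_{t+h}(a)ξ − φ_t(a)ξ‖ → 0 as h → 0⁺, for every t ≥ 0. -/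
open scoped InnerProductSpace

/-- **Right continuity of CP-semigroups in the point-strong operator topology.**
If `(φ_t)` is a semigroup of contractive linear maps on a von Neumann algebra `M ⊆ B(H)`
satisfying the Schwarz inequality and continuity in the point-weak operator topology,
then for every `a ∈ M` and `ξ ∈ H` the map `t ↦ φ_t(a)ξ` is right-continuous in norm. -/
theorem stmt0
    {H : Type*} [NormedAddCommGroup H] [InnerProductSpace ℂ H] [CompleteSpace H]
    (M : VonNeumannAlgebra H)
    (φ : ℝ → (H →L[ℂ] H) → (H →L[ℂ] H))
    (hlin : ∀ t : ℝ, 0 ≤ t → IsLinearMap ℂ (φ t))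
    (hmem : ∀ t : ℝ, 0 ≤ t → ∀ a ∈ M, φ t a ∈ M)
    (hid : ∀ a ∈ M, φ 0 a = a)
    (hsemi : ∀ s t : ℝ, 0 ≤ s → 0 ≤ t → ∀ a ∈ M, φ (s + t) a = φ s (φ t a))
    (hcontr : ∀ t : ℝ, 0 ≤ t → ∀ a ∈ M, ‖φ t a‖ ≤ ‖a‖)
    (hschwarz : ∀ t : ℝ, 0 ≤ t → ∀ a ∈ M,
      (φ t (star a * a) - star (φ t a) * φ t a).IsPositive)
    (hweak : ∀ a ∈ M, ∀ ξ η : H,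
      ContinuousOn (fun t : ℝ => (⟪(φ t a) ξ, η⟫_ℂ)) (Set.Ici (0 : ℝ))) :
    ∀ a ∈ M, ∀ ξ : H, ∀ t : ℝ, 0 ≤ t →
      Filter.Tendsto (fun h : ℝ => ‖(φ (t + h) a) ξ - (φ t a) ξ‖)
        (nhdsWithin 0 (Set.Ioi 0)) (nhds 0) := by
  intro a ha ξ t ht
  set b : H →L[ℂ] H := φ t a with hb_def
  have hb : b ∈ M := hmem t ht a ha
  have hbb : star b * b ∈ M := mul_mem (star_mem hb) hb
  -- the dominating function
  set F : ℝ → ℝ := fun h =>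
    RCLike.re (⟪(φ h (star b * b)) ξ, ξ⟫_ℂ) - 2 * RCLike.re (⟪(φ h b) ξ, b ξ⟫_ℂ)
      + ‖b ξ‖ ^ 2 with hF
  -- limits of the two weak terms as h → 0⁺
  have key : ∀ c ∈ M, ∀ η : H, Filter.Tendsto
      (fun h : ℝ => RCLike.re (⟪(φ h c) ξ, η⟫_ℂ)) (nhdsWithin 0 (Set.Ioi 0))
      (nhds (RCLike.re (⟪c ξ, η⟫_ℂ))) := by
    intro c hc η
    have h1 : Filter.Tendsto (fun h : ℝ => (⟪(φ h c) ξ, η⟫_ℂ))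
        (nhdsWithin 0 (Set.Ici 0)) (nhds (⟪(φ 0 c) ξ, η⟫_ℂ)) :=
      (hweak c hc ξ η).continuousWithinAt (Set.self_mem_Ici)
    rw [hid c hc] at h1
    exact (RCLike.continuous_re (K := ℂ).continuousAt.tendsto.comp h1).mono_left
      (nhdsWithin_mono 0 Set.Ioi_subset_Ici_self)
  have hF0 : Filter.Tendsto F (nhdsWithin 0 (Set.Ioi 0)) (nhds 0) := by
    have h1 := key (star b * b) hbb ξ
    have h2 := key b hb (b ξ)
    have e1 : RCLike.re (⟪(star b * b) ξ, ξ⟫_ℂ) = ‖b ξ‖ ^ 2 := by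
      rw [ContinuousLinearMap.mul_apply, ContinuousLinearMap.star_eq_adjoint,
        ContinuousLinearMap.adjoint_inner_left]
      exact inner_self_eq_norm_sq (b ξ)
    have e2 : RCLike.re (⟪b ξ, b ξ⟫_ℂ) = ‖b ξ‖ ^ 2 := inner_self_eq_norm_sq (b ξ)
    rw [e1] at h1
    rw [e2] at h2
    have := (h1.sub (h2.const_mul 2)).add_const (‖b ξ‖ ^ 2)
    have hz : ‖b ξ‖ ^ 2 - 2 * ‖b ξ‖ ^ 2 + ‖b ξ‖ ^ 2 = 0 := by ring
    rw [hz] at this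
    exact this
  -- squared norm bound: for h > 0, ‖φ h b ξ - b ξ‖² ≤ F h
  have hbd : ∀ h : ℝ, 0 < h → ‖(φ h b) ξ - b ξ‖ ^ 2 ≤ F h := by
    intro h hh
    have hpos := (hschwarz h hh.le b hb).2 ξ
    rw [ContinuousLinearMap.reApplyInnerSelf, ContinuousLinearMap.sub_apply,
      inner_sub_left, map_sub, sub_nonneg] at hpos
    have e3 : RCLike.re (⟪(star (φ h b) * φ h b) ξ, ξ⟫_ℂ) = ‖(φ h b) ξ‖ ^ 2 := by
      rw [ContinuousLinearMap.mul_apply, ContinuousLinearMap.star_eq_adjoint,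
        ContinuousLinearMap.adjoint_inner_left]
      exact inner_self_eq_norm_sq _
    rw [e3] at hpos
    have := norm_sub_sq (𝕜 := ℂ) ((φ h b) ξ) (b ξ)
    rw [this]
    simp only [hF]
    linarith
  -- rewrite the target function on Ioi 0
  have heq : ∀ᶠ h : ℝ in nhdsWithin 0 (Set.Ioi 0),
      ‖(φ (t + h) a) ξ - (φ t a) ξ‖ = ‖(φ h b) ξ - b ξ‖ := by
    filter_upwards [self_mem_nhdsWithin] with h hh
    have : φ (t + h) a = φ h b := by
      rw [add_comm, hsemi h t (le_of_lt hh) ht a ha]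
    rw [this, hb_def]
  rw [Filter.tendsto_congr' heq]
  -- squeeze
  have hsq : Filter.Tendsto (fun h : ℝ => ‖(φ h b) ξ - b ξ‖ ^ 2)
      (nhdsWithin 0 (Set.Ioi 0)) (nhds 0) := by
    apply squeeze_zero' (Filter.Eventually.of_forall fun h => by positivity)
      ?_ hF0
    filter_upwards [self_mem_nhdsWithin] with h hh
    exact hbd h hh
  have : Filter.Tendsto (fun h : ℝ => Real.sqrt (‖(φ h b) ξ - b ξ‖ ^ 2))
      (nhdsWithin 0 (Set.Ioi 0)) (nhds (Real.sqrt 0)) :=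
    (Real.continuous_sqrt.continuousAt.tendsto).comp hsq
  simpa [Real.sqrt_sq (norm_nonneg _), Real.sqrt_zero] using this
end

section
/- There exist a complex Hilbert space H and three pairwise commuting contractions T₁, T₂, T₃ ∈ B(H) with the following property. For n = (n₁, n₂, n₃) ∈ ℕ³ define Θ_n : B(H) → B(H) by Θ_n(a) = T₁^{n₁} T₂^{n₂} T₃^{n₃} a (T₃^{n₃})* (T₂^{n₂})* (T₁^{n₁})*. Then there is no triple (K, u, α) consisting of a complex Hilbert space K, an isometry u : H → K, and a family α = (α_n)_{n ∈ ℕ³} of *-homomorphisms α_n : B(K) → B(K) with α_0 = id and α_{m+n} = α_m ∘ α_n for all m, n ∈ ℕ³, each α_n normal (i.e. whenever a bounded net (a_j) converges to a in the weak operator topology, α_n(a_j) → α_n(a) in the weak operator topology), satisfying Θ_n(u* a u) = u* α_n(a) u for every n ∈ ℕ³ and every a ∈ B(K). -/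
/-!
A multiplicative `*`-map `β` of `B(K)` whose compression by the isometry `u : H → K` is
`a ↦ S a S*` determines, as soon as `S* h₀ ≠ 0`, a unique isometry `V` of `K` with
`β(a) V = V a` and `u* V = S u*`: necessarily `‖S* h₀‖² V ζ = β(|ζ⟩⟨u S* h₀|) (u h₀)`, and this
formula does define such an isometry. By uniqueness, an e-dilation `α` of `n ↦ S_n (·) S_n*`
yields a semigroup `n ↦ V_n` of commuting isometries, and `V_n` extends `S_n` on every vector
where `S_n` is isometric.

On `ℂ⁵` take `T₁, T₂, T₃` sending `(e₀, e₁)` to `(e₂, e₃)`, `(e₂, -e₃)`, `(e₃, e₂)` and fixing `e₄`;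
all their pairwise products are the projection onto `e₄`, so they commute. Commuting isometric
extensions `V₁, V₂, V₃` would give
`V₁(-e₃) = V₂ V₁ e₁ = V₂ V₃ e₀ = V₃ V₁ e₀ = V₁ e₃`, contradicting injectivity of `V₁`.
-/

open scoped InnerProductSpace
open ContinuousLinearMap InnerProductSpace

noncomputable section

section InnerPreserving

variable {𝕜 E F : Type*} [RCLike 𝕜] [NormedAddCommGroup E] [InnerProductSpace 𝕜 E]
  [NormedAddCommGroup F] [InnerProductSpace 𝕜 F]

theorem eq_of_inner_self_eq_inner {x y : E} (hx : ⟪x, x⟫_𝕜 = ⟪x, y⟫_𝕜)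
    (hy : ⟪y, y⟫_𝕜 = ⟪x, y⟫_𝕜) : x = y := by
  have hyx : ⟪y, x⟫_𝕜 = ⟪y, y⟫_𝕜 := by rw [← inner_conj_symm, ← hy, inner_self_conj]
  rw [← sub_eq_zero, ← inner_self_eq_zero (𝕜 := 𝕜), inner_sub_sub_self, hyx, ← hx]
  ring

def LinearIsometry.ofInnerPreserving (f : E → F) (hf : ∀ x y, ⟪f x, f y⟫_𝕜 = ⟪x, y⟫_𝕜) :
    E →ₗᵢ[𝕜] F :=
  LinearMap.isometryOfInner
    { toFun := f
      map_add' := fun x y => by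
        rw [← sub_eq_zero, ← inner_self_eq_zero (𝕜 := 𝕜)]
        simp only [inner_sub_left, inner_sub_right, inner_add_left, inner_add_right, hf]
        ring
      map_smul' := fun c x => by
        rw [← sub_eq_zero, ← inner_self_eq_zero (𝕜 := 𝕜)]
        simp only [inner_sub_left, inner_sub_right, inner_smul_left, inner_smul_right, hf,
          RingHom.id_apply]
        ring }
    hf

@[simp]
theorem LinearIsometry.coe_ofInnerPreserving (f : E → F)
    (hf : ∀ x y, ⟪f x, f y⟫_𝕜 = ⟪x, y⟫_𝕜) : ⇑(LinearIsometry.ofInnerPreserving f hf) = f :=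
  rfl

end InnerPreserving

section Triple

variable {M : Type*} [Monoid M]

def triplePow (a b c : M) (n : ℕ × ℕ × ℕ) : M :=
  a ^ n.1 * b ^ n.2.1 * c ^ n.2.2

theorem triplePow_add {a b c : M} (hab : Commute a b) (hac : Commute a c) (hbc : Commute b c)
    (m n : ℕ × ℕ × ℕ) : triplePow a b c (m + n) = triplePow a b c m * triplePow a b c n := by
  simp only [triplePow, Prod.fst_add, Prod.snd_add, pow_add]
  rw [((hac.pow_pow _ _).mul_left (hbc.pow_pow _ _)).symm.mul_mul_mul_comm,
    (hab.pow_pow _ _).symm.mul_mul_mul_comm]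

end Triple

section Dilation

variable {H K : Type*} [NormedAddCommGroup H] [InnerProductSpace ℂ H] [CompleteSpace H]
  [NormedAddCommGroup K] [InnerProductSpace ℂ K]

structure IsIntertwiner (u : H →ₗᵢ[ℂ] K) (S : H →L[ℂ] H) (β : (K →L[ℂ] K) → (K →L[ℂ] K))
    (V : K →L[ℂ] K) : Prop where
  inner_map_map : ∀ ζ ζ', ⟪V ζ, V ζ'⟫_ℂ = ⟪ζ, ζ'⟫_ℂ
  inner_map_left : ∀ ζ h, ⟪V ζ, u h⟫_ℂ = ⟪ζ, u (star S h)⟫_ℂ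
  map_mul_eq_mul : ∀ a, β a * V = V * a

variable {u : H →ₗᵢ[ℂ] K} {S : H →L[ℂ] H} {β : (K →L[ℂ] K) → (K →L[ℂ] K)} {V : K →L[ℂ] K}

namespace IsIntertwiner

theorem injective (hV : IsIntertwiner u S β V) : Function.Injective V :=
  (LinearIsometry.ofInnerPreserving V hV.inner_map_map).injective

theorem map_one_mul (hV : IsIntertwiner u S β V) : β 1 * V = V := by
  rw [hV.map_mul_eq_mul, mul_one]

theorem mul {S₁ S₂ : H →L[ℂ] H} {β₁ β₂ : (K →L[ℂ] K) → (K →L[ℂ] K)} {V₁ V₂ : K →L[ℂ] K}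
    (hV₁ : IsIntertwiner u S₁ β₁ V₁) (hV₂ : IsIntertwiner u S₂ β₂ V₂) :
    IsIntertwiner u (S₁ * S₂) (β₁ ∘ β₂) (V₁ * V₂) where
  inner_map_map ζ ζ' := by
    rw [mul_apply_eq_comp, mul_apply_eq_comp, hV₁.inner_map_map, hV₂.inner_map_map]
  inner_map_left ζ h := by
    rw [mul_apply_eq_comp, hV₁.inner_map_left, hV₂.inner_map_left, star_mul, mul_apply_eq_comp]
  map_mul_eq_mul a := by
    rw [Function.comp_apply, ← mul_assoc, hV₁.map_mul_eq_mul, mul_assoc, hV₂.map_mul_eq_mul,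
      mul_assoc]

theorem apply_coe_of_norm_eq (hV : IsIntertwiner u S β V) {h : H} (hS : ‖S h‖ = ‖h‖) :
    V (u h) = u (S h) := by
  have hSS : ⟪S h, S h⟫_ℂ = ⟪h, h⟫_ℂ := by simp only [inner_self_eq_norm_sq_to_K, hS]
  apply eq_of_inner_self_eq_inner (𝕜 := ℂ)
  · rw [hV.inner_map_map, hV.inner_map_left, u.inner_map_map, u.inner_map_map, star_eq_adjoint,
      adjoint_inner_right, hSS]
  · rw [hV.inner_map_left, u.inner_map_map, u.inner_map_map, star_eq_adjoint, adjoint_inner_right]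

end IsIntertwiner

variable [CompleteSpace K]

structure IsEndoDilation (u : H →ₗᵢ[ℂ] K) (S : H →L[ℂ] H)
    (β : (K →L[ℂ] K) → (K →L[ℂ] K)) : Prop where
  map_mul : ∀ a b, β (a * b) = β a * β b
  map_star : ∀ a, β (star a) = star (β a)
  compress : ∀ a, S * ((adjoint u.toContinuousLinearMap).comp (a.comp u.toContinuousLinearMap))
      * star S = (adjoint u.toContinuousLinearMap).comp ((β a).comp u.toContinuousLinearMap)

namespace IsEndoDilation

theorem inner_map_left (hβ : IsEndoDilation u S β) (a : K →L[ℂ] K) (x y : K) :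
    ⟪β a x, y⟫_ℂ = ⟪x, β (star a) y⟫_ℂ := by
  rw [hβ.map_star, star_eq_adjoint, adjoint_inner_right]

theorem inner_map_map (hβ : IsEndoDilation u S β) (a b : K →L[ℂ] K) (x y : K) :
    ⟪β a x, β b y⟫_ℂ = ⟪x, β (star a * b) y⟫_ℂ := by
  rw [hβ.inner_map_left, hβ.map_mul, mul_apply_eq_comp]

theorem inner_coe_map_coe (hβ : IsEndoDilation u S β) (a : K →L[ℂ] K) (h h' : H) :
    ⟪u h', β a (u h)⟫_ℂ = ⟪u (star S h'), a (u (star S h))⟫_ℂ := by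
  have hh := congr($(hβ.compress a) h)
  simp only [mul_apply_eq_comp, comp_apply, LinearIsometry.coe_toContinuousLinearMap] at hh
  calc ⟪u h', β a (u h)⟫_ℂ = ⟪h', adjoint u.toContinuousLinearMap (β a (u h))⟫_ℂ :=
        (adjoint_inner_right u.toContinuousLinearMap h' _).symm
    _ = ⟪star S h', adjoint u.toContinuousLinearMap (a (u (star S h)))⟫_ℂ := by
        rw [← hh, star_eq_adjoint, adjoint_inner_left]
    _ = ⟪u (star S h'), a (u (star S h))⟫_ℂ := adjoint_inner_right u.toContinuousLinearMap _ _

end IsEndoDilation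

namespace IsIntertwiner

theorem apply_coe_star (hβ : IsEndoDilation u S β) (hV : IsIntertwiner u S β V) (h : H) :
    V (u (star S h)) = β 1 (u h) := by
  have hcross : ⟪β 1 (u h), V (u (star S h))⟫_ℂ = ⟪star S h, star S h⟫_ℂ := by
    rw [hβ.inner_map_left, star_one, ← mul_apply_eq_comp, hV.map_one_mul, ← inner_conj_symm,
      hV.inner_map_left, u.inner_map_map, inner_self_conj]
  symm
  apply eq_of_inner_self_eq_inner (𝕜 := ℂ)
  · rw [hcross, hβ.inner_map_map, star_one, one_mul, hβ.inner_coe_map_coe, one_apply_eq_self,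
      u.inner_map_map]
  · rw [hcross, hV.inner_map_map, u.inner_map_map]

theorem inner_self_smul_apply (hβ : IsEndoDilation u S β) (hV : IsIntertwiner u S β V) (h₀ : H)
    (ζ : K) :
    ⟪star S h₀, star S h₀⟫_ℂ • V ζ = β (rankOne ℂ ζ (u (star S h₀))) (u h₀) := by
  rw [← u.inner_map_map, ← map_smul, ← rankOne_apply, ← mul_apply_eq_comp, ← hV.map_mul_eq_mul,
    mul_apply_eq_comp, hV.apply_coe_star hβ, ← mul_apply_eq_comp, ← hβ.map_mul, mul_one]

theorem unique {W : K →L[ℂ] K} (hβ : IsEndoDilation u S β) (hV : IsIntertwiner u S β V)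
    (hW : IsIntertwiner u S β W) {h₀ : H} (hne : star S h₀ ≠ 0) : V = W := by
  ext ζ
  apply smul_right_injective K (inner_self_ne_zero (𝕜 := ℂ) |>.mpr hne)
  simp only [hV.inner_self_smul_apply hβ, hW.inner_self_smul_apply hβ]

end IsIntertwiner

theorem IsEndoDilation.exists_isIntertwiner (hβ : IsEndoDilation u S β) {h₀ : H}
    (hne : star S h₀ ≠ 0) : ∃ V, IsIntertwiner u S β V := by
  set c := ⟪star S h₀, star S h₀⟫_ℂ
  have hc : c ≠ 0 := inner_self_ne_zero.mpr hne
  have hcξ : ⟪u (star S h₀), u (star S h₀)⟫_ℂ = c := u.inner_map_map _ _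
  have hc_conj : (starRingEnd ℂ) c = c := inner_self_conj _
  set f : K → K := fun ζ => c⁻¹ • β (rankOne ℂ ζ (u (star S h₀))) (u h₀)
  have hf : ∀ ζ ζ', ⟪f ζ, f ζ'⟫_ℂ = ⟪ζ, ζ'⟫_ℂ := fun ζ ζ' => by
    have hr : star (rankOne ℂ ζ (u (star S h₀))) * rankOne ℂ ζ' (u (star S h₀)) =
        ⟪ζ, ζ'⟫_ℂ • rankOne ℂ (u (star S h₀)) (u (star S h₀)) := by
      rw [star_eq_adjoint, adjoint_rankOne, mul_def, rankOne_comp_rankOne]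
    simp only [f, inner_smul_left, inner_smul_right, hβ.inner_map_map, hr,
      hβ.inner_coe_map_coe, smul_apply, rankOne_apply, hcξ, map_inv₀, hc_conj]
    field_simp
  refine ⟨(LinearIsometry.ofInnerPreserving f hf).toContinuousLinearMap, hf, fun ζ h => ?_,
    fun a => ext fun ζ => ?_⟩
  · rw [LinearIsometry.coe_toContinuousLinearMap, LinearIsometry.coe_ofInnerPreserving,
      inner_smul_left, ← inner_conj_symm, hβ.inner_coe_map_coe, rankOne_apply, hcξ,
      inner_smul_right, _root_.map_mul (starRingEnd ℂ), map_inv₀, hc_conj, inner_conj_symm]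
    field_simp
  · change β a (f ζ) = f (a ζ)
    rw [map_smul, ← mul_apply_eq_comp, ← hβ.map_mul, mul_def, comp_rankOne]

end Dilation

namespace BhatCounterexample

abbrev H₅ : Type := EuclideanSpace ℂ (Fin 5)

local notation "e" => EuclideanSpace.single (𝕜 := ℂ) (ι := Fin 5)

-- Only `e₀, e₁` enter the contradiction; `e₄`, fixed by all three, keeps every
-- `star (triplePow T₁ T₂ T₃ n)` nonzero, as `IsEndoDilation.exists_isIntertwiner` requires.
def T₁ : H₅ →L[ℂ] H₅ := Matrix.toEuclideanCLM (𝕜 := ℂ)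
  !![0, 0, 0, 0, 0; 0, 0, 0, 0, 0; 1, 0, 0, 0, 0; 0, 1, 0, 0, 0; 0, 0, 0, 0, 1]

def T₂ : H₅ →L[ℂ] H₅ := Matrix.toEuclideanCLM (𝕜 := ℂ)
  !![0, 0, 0, 0, 0; 0, 0, 0, 0, 0; 1, 0, 0, 0, 0; 0, -1, 0, 0, 0; 0, 0, 0, 0, 1]

def T₃ : H₅ →L[ℂ] H₅ := Matrix.toEuclideanCLM (𝕜 := ℂ)
  !![0, 0, 0, 0, 0; 0, 0, 0, 0, 0; 0, 1, 0, 0, 0; 1, 0, 0, 0, 0; 0, 0, 0, 0, 1]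

theorem T₁_apply (x : H₅) : T₁ x = !₂[0, 0, x 0, x 1, x 4] := by
  ext i
  fin_cases i <;> simp [T₁, Matrix.ofLp_toEuclideanCLM, Matrix.mulVec, dotProduct,
    Fin.sum_univ_five]

theorem T₂_apply (x : H₅) : T₂ x = !₂[0, 0, x 0, -x 1, x 4] := by
  ext i
  fin_cases i <;> simp [T₂, Matrix.ofLp_toEuclideanCLM, Matrix.mulVec, dotProduct,
    Fin.sum_univ_five]

theorem T₃_apply (x : H₅) : T₃ x = !₂[0, 0, x 1, x 0, x 4] := by
  ext i
  fin_cases i <;> simp [T₃, Matrix.ofLp_toEuclideanCLM, Matrix.mulVec, dotProduct,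
    Fin.sum_univ_five]

theorem commute_T₁_T₂ : Commute T₁ T₂ := by
  ext x i
  fin_cases i <;> simp [T₁_apply, T₂_apply]

theorem commute_T₁_T₃ : Commute T₁ T₃ := by
  ext x i
  fin_cases i <;> simp [T₁_apply, T₃_apply]

theorem commute_T₂_T₃ : Commute T₂ T₃ := by
  ext x i
  fin_cases i <;> simp [T₂_apply, T₃_apply]

theorem opNorm_le_one_of_norm_sq_apply {T : H₅ →L[ℂ] H₅}
    (hT : ∀ x, ‖T x‖ ^ 2 = ‖x 0‖ ^ 2 + ‖x 1‖ ^ 2 + ‖x 4‖ ^ 2) : ‖T‖ ≤ 1 := by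
  refine opNorm_le_bound _ zero_le_one fun x => ?_
  rw [one_mul, ← sq_le_sq₀ (norm_nonneg _) (norm_nonneg _), hT, EuclideanSpace.norm_sq_eq,
    Fin.sum_univ_five]
  nlinarith [sq_nonneg ‖x 2‖, sq_nonneg ‖x 3‖]

theorem norm_T₁_le : ‖T₁‖ ≤ 1 :=
  opNorm_le_one_of_norm_sq_apply fun x => by
    simp [T₁_apply, EuclideanSpace.norm_sq_eq, Fin.sum_univ_five]

theorem norm_T₂_le : ‖T₂‖ ≤ 1 :=
  opNorm_le_one_of_norm_sq_apply fun x => by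
    simp [T₂_apply, EuclideanSpace.norm_sq_eq, Fin.sum_univ_five]

theorem norm_T₃_le : ‖T₃‖ ≤ 1 :=
  opNorm_le_one_of_norm_sq_apply fun x => by
    simp [T₃_apply, EuclideanSpace.norm_sq_eq, Fin.sum_univ_five]
    ring

theorem star_triplePow_e₄_ne_zero (n : ℕ × ℕ × ℕ) : star (triplePow T₁ T₂ T₃ n) (e 4 1) ≠ 0 := by
  have hpow : ∀ T : H₅ →L[ℂ] H₅, T (e 4 1) = e 4 1 → ∀ k : ℕ, (T ^ k) (e 4 1) = e 4 1 :=
    fun T hT k => by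
      induction k with
      | zero => rfl
      | succ k ih => rw [pow_succ, mul_apply_eq_comp, hT, ih]
  have hfix : triplePow T₁ T₂ T₃ n (e 4 1) = e 4 1 := by
    have h₁ : T₁ (e 4 1) = e 4 1 := by ext i; fin_cases i <;> simp [T₁_apply]
    have h₂ : T₂ (e 4 1) = e 4 1 := by ext i; fin_cases i <;> simp [T₂_apply]
    have h₃ : T₃ (e 4 1) = e 4 1 := by ext i; fin_cases i <;> simp [T₃_apply]
    simp only [triplePow, mul_apply_eq_comp, hpow _ h₁, hpow _ h₂, hpow _ h₃]
  intro h0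
  have := congr(⟪$h0, e 4 1⟫_ℂ)
  rw [star_eq_adjoint, adjoint_inner_left, hfix, inner_zero_left] at this
  simp at this

theorem not_commuting_isometric_lifts {K : Type*} [NormedAddCommGroup K] [InnerProductSpace ℂ K]
    (u : H₅ →ₗᵢ[ℂ] K) {V₁ V₂ V₃ : K →L[ℂ] K} (h₁₂ : Commute V₁ V₂) (h₁₃ : Commute V₁ V₃)
    (h₂₃ : Commute V₂ V₃) (hV₁ : Function.Injective V₁)
    (hT₁ : ∀ h, ‖T₁ h‖ = ‖h‖ → V₁ (u h) = u (T₁ h))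
    (hT₂ : ∀ h, ‖T₂ h‖ = ‖h‖ → V₂ (u h) = u (T₂ h))
    (hT₃ : ∀ h, ‖T₃ h‖ = ‖h‖ → V₃ (u h) = u (T₃ h)) : False := by
  have hT₁₀ : T₁ (e 0 1) = e 2 1 := by ext i; fin_cases i <;> simp [T₁_apply]
  have hT₁₁ : T₁ (e 1 1) = e 3 1 := by ext i; fin_cases i <;> simp [T₁_apply]
  have hT₂₀ : T₂ (e 0 1) = e 2 1 := by ext i; fin_cases i <;> simp [T₂_apply]
  have hT₂₁ : T₂ (e 1 1) = -e 3 1 := by ext i; fin_cases i <;> simp [T₂_apply]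
  have hT₃₀ : T₃ (e 0 1) = e 3 1 := by ext i; fin_cases i <;> simp [T₃_apply]
  have hV₁₀ : V₁ (u (e 0 1)) = u (e 2 1) := by simpa [hT₁₀] using hT₁ (e 0 1)
  have hV₁₁ : V₁ (u (e 1 1)) = u (e 3 1) := by simpa [hT₁₁] using hT₁ (e 1 1)
  have hV₂₀ : V₂ (u (e 0 1)) = u (e 2 1) := by simpa [hT₂₀] using hT₂ (e 0 1)
  have hV₂₁ : V₂ (u (e 1 1)) = u (-e 3 1) := by simpa [hT₂₁] using hT₂ (e 1 1)
  have hV₃₀ : V₃ (u (e 0 1)) = u (e 3 1) := by simpa [hT₃₀] using hT₃ (e 0 1)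
  have key : V₁ (u (-e 3 1)) = V₁ (u (e 3 1)) := calc
    V₁ (u (-e 3 1)) = V₁ (V₂ (u (e 1 1))) := by rw [hV₂₁]
    _ = V₂ (V₁ (u (e 1 1))) := congr($h₁₂.eq (u (e 1 1)))
    _ = V₂ (V₃ (u (e 0 1))) := by rw [hV₁₁, hV₃₀]
    _ = V₃ (V₂ (u (e 0 1))) := congr($h₂₃.eq (u (e 0 1)))
    _ = V₃ (V₁ (u (e 0 1))) := by rw [hV₂₀, hV₁₀]
    _ = V₁ (V₃ (u (e 0 1))) := congr($h₁₃.eq.symm (u (e 0 1)))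
    _ = V₁ (u (e 3 1)) := by rw [hV₃₀]
  have h3 := u.injective (hV₁ key)
  rw [neg_eq_iff_add_eq_zero, ← two_smul ℂ] at h3
  simp at h3

end BhatCounterexample

end

open BhatCounterexample in
/-- **A semigroup of three commuting CP maps on `B(H)` with no `*`-endomorphic dilation**
(settling a question of Bhat, 1998).  There exist a Hilbert space `H` and three pairwise
commuting contractions `T₁, T₂, T₃` such that the `cp`-semigroup
`Θ_n(a) = T₁^{n₁}T₂^{n₂}T₃^{n₃} a (T₃^{n₃})^*(T₂^{n₂})^*(T₁^{n₁})^*` over `ℕ³` admits no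
e-dilation `(K, u, α)` by a semigroup of normal `*`-endomorphisms of `B(K)`. -/
theorem stmt5 :
    ∃ (H : Type) (_ : NormedAddCommGroup H) (_ : InnerProductSpace ℂ H)
      (_ : CompleteSpace H) (T₁ T₂ T₃ : H →L[ℂ] H),
      ‖T₁‖ ≤ 1 ∧ ‖T₂‖ ≤ 1 ∧ ‖T₃‖ ≤ 1 ∧
      Commute T₁ T₂ ∧ Commute T₁ T₃ ∧ Commute T₂ T₃ ∧
      ¬ ∃ (K : Type u) (_ : NormedAddCommGroup K) (_ : InnerProductSpace ℂ K)
          (_ : CompleteSpace K) (u : H →ₗᵢ[ℂ] K)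
          (α : ℕ × ℕ × ℕ → (K →L[ℂ] K) → (K →L[ℂ] K)),
          (∀ (n : ℕ × ℕ × ℕ) (a b : K →L[ℂ] K), α n (a + b) = α n a + α n b) ∧
          (∀ (n : ℕ × ℕ × ℕ) (a b : K →L[ℂ] K), α n (a * b) = α n a * α n b) ∧
          (∀ (n : ℕ × ℕ × ℕ) (a : K →L[ℂ] K), α n (star a) = star (α n a)) ∧
          (∀ a : K →L[ℂ] K, α 0 a = a) ∧
          (∀ (m n : ℕ × ℕ × ℕ) (a : K →L[ℂ] K), α (m + n) a = α m (α n a)) ∧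
          (∀ (n : ℕ × ℕ × ℕ), ∀ (ι : Type u) [Preorder ι] [IsDirected ι (· ≤ ·)]
            [Nonempty ι], ∀ (f : ι → K →L[ℂ] K) (L : K →L[ℂ] K) (C : ℝ),
            (∀ j, ‖f j‖ ≤ C) →
            (∀ ξ η : K, Filter.Tendsto (fun j => ⟪(f j) ξ, η⟫_ℂ) Filter.atTop
              (nhds ⟪L ξ, η⟫_ℂ)) →
            (∀ ξ η : K, Filter.Tendsto (fun j => ⟪(α n (f j)) ξ, η⟫_ℂ) Filter.atTop
              (nhds ⟪(α n L) ξ, η⟫_ℂ))) ∧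
          (∀ (n : ℕ × ℕ × ℕ) (a : K →L[ℂ] K),
            (T₁ ^ n.1 * T₂ ^ n.2.1 * T₃ ^ n.2.2) *
                ((ContinuousLinearMap.adjoint u.toContinuousLinearMap).comp
                  (a.comp u.toContinuousLinearMap)) *
                star (T₁ ^ n.1 * T₂ ^ n.2.1 * T₃ ^ n.2.2) =
              (ContinuousLinearMap.adjoint u.toContinuousLinearMap).comp
                ((α n a).comp u.toContinuousLinearMap)) := by
  refine ⟨H₅, inferInstance, inferInstance, inferInstance, T₁, T₂, T₃, norm_T₁_le, norm_T₂_le,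
    norm_T₃_le, commute_T₁_T₂, commute_T₁_T₃, commute_T₂_T₃, ?_⟩
  rintro ⟨K, _, _, _, u, α, -, hmul, hstar, -, hcomp, -, hcov⟩
  have hα : ∀ n, IsEndoDilation u (triplePow T₁ T₂ T₃ n) (α n) :=
    fun n => ⟨hmul n, hstar n, hcov n⟩
  choose V hV using fun n => (hα n).exists_isIntertwiner (star_triplePow_e₄_ne_zero n)
  have hV_add : ∀ m n, V (m + n) = V m * V n := fun m n => by
    refine (hV (m + n)).unique (hα (m + n)) ?_ (star_triplePow_e₄_ne_zero (m + n))
    rw [triplePow_add commute_T₁_T₂ commute_T₁_T₃ commute_T₂_T₃, show α (m + n) = α m ∘ α n from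
      funext (hcomp m n)]
    exact (hV m).mul (hV n)
  have hV_comm : ∀ m n, Commute (V m) (V n) := fun m n => by
    rw [Commute, SemiconjBy, ← hV_add, ← hV_add, add_comm]
  have hlift := fun n (h : H₅) => (hV n).apply_coe_of_norm_eq (h := h)
  exact not_commuting_isometric_lifts u (hV_comm _ _) (hV_comm _ _) (hV_comm _ _)
    (hV _).injective (by simpa [triplePow] using hlift (1, 0, 0))
    (by simpa [triplePow] using hlift (0, 1, 0)) (by simpa [triplePow] using hlift (0, 0, 1))
end

section
/- Fix d ≥ 1 and for n ∈ ℕ let V_n be the complex inner-product space of functions from words of length n over {1,…,d} to ℂ, with standard orthonormal basis (e_w) indexed by such words; for subspaces A ⊆ V_m, B ⊆ V_n let A·B ⊆ V_{m+n} denote the span of the products a·b, where e_u·e_v := e_{uv} (concatenation) extended bilinearly. Call a family X = (X(n))_{n∈ℕ} of subspaces X(n) ⊆ V_n with X(0) = V_0 and X(m+n) ⊆ X(m)·X(n) for all m, n a standard subproduct system over ℂ^d. Suppose X is a standard subproduct system over ℂ^d such that: (1) for every n ≥ 1, X(n) is the span of a set of basis vectors {e_w : w ∈ A_n} for some set A_n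 of words of length n; and (2) for all m, n ∈ ℕ and every word α of length n with e_α ∈ X(n), there exist words β and γ of length m with e_{βα} ∈ X(m+n) and e_{αγ} ∈ X(m+n). Then there exists a nonempty closed shift-invariant subset Λ ⊆ {1,…,d}^ℤ such that X(n) = span{e_w : w ∈ Λⁿ} for every n ≥ 1. Moreover, X satisfies X(n) = ⋂_{i+j=n, i,j≥1} (X(i)·V_j) ∩ (V_i·X(j)) for all n > k+1 (i.e. X is the maximal standard subproduct system with prescribed fibers X(1),…,X(k+1)) if and only if Λ is a k-step subshift of finite type. -/
noncomputable section

/-- The bilinear concatenation product determined by `e_u ⋆ e_v = e_{uv}`. -/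
def wordMul {d m n : ℕ} (f : (Fin m → Fin d) → ℂ) (g : (Fin n → Fin d) → ℂ) :
    (Fin (m + n) → Fin d) → ℂ :=
  fun w => f (fun i => w (Fin.castAdd n i)) * g (fun j => w (Fin.natAdd m j))

/-- `A·B`: the span of the concatenation products of elements of `A` and `B`. -/
def prodSpan {d m n : ℕ} (A : Submodule ℂ ((Fin m → Fin d) → ℂ))
    (B : Submodule ℂ ((Fin n → Fin d) → ℂ)) :
    Submodule ℂ ((Fin (m + n) → Fin d) → ℂ) :=
  Submodule.span ℂ {x | ∃ a ∈ A, ∃ b ∈ B, x = wordMul a b}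

/-- Reindexing `V_m ≃ V_n` along an equality `m = n` of word lengths. -/
def castWords {d m n : ℕ} (h : m = n) :
    ((Fin m → Fin d) → ℂ) ≃ₗ[ℂ] ((Fin n → Fin d) → ℂ) := by
  subst h; exact LinearEquiv.refl ℂ _

/-- A finite word occurs as a block of consecutive entries of a bi-infinite sequence. -/
def OccursIn {d : ℕ} (w : List (Fin d)) (x : ℤ → Fin d) : Prop :=
  ∃ m : ℤ, ∀ i : Fin w.length, x (m + (i : ℕ)) = w.get i

/-- The language of `Λ ⊆ {1,…,d}^ℤ`: all finite words occurring as blocks of points of `Λ`. -/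
def lang {d : ℕ} (Λ : Set (ℤ → Fin d)) : Set (List (Fin d)) :=
  {w | ∃ x ∈ Λ, OccursIn w x}

/-- The left shift on `{1,…,d}^ℤ`. -/
def shiftSeq {d : ℕ} (x : ℤ → Fin d) : ℤ → Fin d := fun k => x (k + 1)

/-- `Λ` is a `k`-step subshift of finite type: it is the set of bi-infinite sequences
avoiding a finite set of forbidden nonempty words, each of length at most `k+1`. -/
def IsKStepSFT {d : ℕ} (k : ℕ) (Λ : Set (ℤ → Fin d)) : Prop :=
  ∃ W : Set (List (Fin d)), W.Finite ∧ (∀ w ∈ W, w ≠ [] ∧ w.length ≤ k + 1) ∧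
    Λ = {x | ∀ w ∈ W, ¬ OccursIn w x}

/-!
The words `w` with `e_w ∈ X(n)` form a language `ℒ` which is factorial, because
`X(m+n) ⊆ X(m)·X(n)`, and extendable on both sides. By compactness of `{1,…,d}^ℤ`, such a
language is the language of the subshift of all points whose blocks lie in `ℒ`. Read on words,
maximality above `k+1` says that a word longer than `k+1` lies in `ℒ` as soon as its two maximal
proper factors do. This makes the subshift the SFT forbidding the words of length at most `k+1`
outside `ℒ`; conversely, in an SFT, two points realizing the maximal proper factors of a word can
be glued along their overlap, which is longer than every forbidden word.
-/

open List

section BasisSpan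

variable {R α : Type*} [Semiring R] [DecidableEq α]

def basisSpan (S : Set α) : Submodule R (α → R) :=
  Submodule.span R ((fun a => Pi.single a 1) '' S)

variable [Finite α] {S : Set α}

theorem mem_basisSpan {f : α → R} : f ∈ basisSpan S ↔ ∀ a, f a ≠ 0 → a ∈ S := by
  have hbasis : ⇑(Pi.basisFun R α) = fun a => Pi.single a 1 := funext (Pi.basisFun_apply R α)
  rw [basisSpan, ← hbasis, Module.Basis.mem_span_image]
  simp [Set.subset_def]

theorem single_mem_basisSpan [Nontrivial R] {a : α} :
    Pi.single a (1 : R) ∈ basisSpan S ↔ a ∈ S :=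
  ⟨fun h => mem_basisSpan.1 h a (by simp), fun h => Submodule.subset_span ⟨a, h, rfl⟩⟩

theorem basisSpan_univ : basisSpan (R := R) (Set.univ : Set α) = ⊤ :=
  eq_top_iff.2 fun _ _ => mem_basisSpan.2 fun _ _ => trivial

theorem basisSpan_injective [Nontrivial R] :
    Function.Injective (basisSpan (R := R) : Set α → Submodule R (α → R)) :=
  fun S T h => Set.ext fun a => by rw [← single_mem_basisSpan (R := R), h, single_mem_basisSpan]

end BasisSpan

section Words

variable {d : ℕ}

theorem ofFn_eq_ofFn_castAdd_append {α : Type*} {m n : ℕ} (w : Fin (m + n) → α) :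
    ofFn w = ofFn (fun i => w (Fin.castAdd n i)) ++ ofFn (fun j => w (Fin.natAdd m j)) :=
  List.ofFn_add

theorem wordMul_single_castAdd_natAdd {m n : ℕ} (w : Fin (m + n) → Fin d) :
    wordMul (Pi.single (fun i => w (Fin.castAdd n i)) (1 : ℂ))
      (Pi.single (fun j => w (Fin.natAdd m j)) 1) = Pi.single w 1 := by
  funext v
  have hsplit : v = w ↔ (fun i => v (Fin.castAdd n i)) = (fun i => w (Fin.castAdd n i)) ∧
      (fun j => v (Fin.natAdd m j)) = (fun j => w (Fin.natAdd m j)) := by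
    rw [← List.ofFn_inj, ← List.ofFn_inj, ← List.ofFn_inj, ofFn_eq_ofFn_castAdd_append v,
      ofFn_eq_ofFn_castAdd_append w]
    exact ⟨fun h => List.append_inj h (by simp), fun h => by rw [h.1, h.2]⟩
  simp only [wordMul, Pi.single_apply, hsplit]
  split_ifs <;> simp_all

theorem prodSpan_basisSpan {m n : ℕ} (ℒ₁ ℒ₂ : Set (List (Fin d))) :
    prodSpan (basisSpan {u : Fin m → Fin d | ofFn u ∈ ℒ₁})
        (basisSpan {v : Fin n → Fin d | ofFn v ∈ ℒ₂}) =
      basisSpan {w | (ofFn w).take m ∈ ℒ₁ ∧ (ofFn w).drop m ∈ ℒ₂} := by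
  have htake (w : Fin (m + n) → Fin d) : (ofFn w).take m = ofFn fun i => w (Fin.castAdd n i) := by
    rw [ofFn_eq_ofFn_castAdd_append, List.take_left' (by simp)]
  have hdrop (w : Fin (m + n) → Fin d) : (ofFn w).drop m = ofFn fun j => w (Fin.natAdd m j) := by
    rw [ofFn_eq_ofFn_castAdd_append, List.drop_left' (by simp)]
  apply le_antisymm
  · rw [prodSpan, Submodule.span_le]
    rintro _ ⟨a, ha, b, hb, rfl⟩
    refine mem_basisSpan.2 fun w hw => ?_
    obtain ⟨hwa, hwb⟩ := mul_ne_zero_iff.1 hw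
    simp only [Set.mem_ofPred_eq, htake, hdrop]
    exact ⟨mem_basisSpan.1 ha _ hwa, mem_basisSpan.1 hb _ hwb⟩
  · rw [basisSpan, Submodule.span_le]
    rintro _ ⟨w, ⟨hw₁, hw₂⟩, rfl⟩
    rw [htake] at hw₁
    rw [hdrop] at hw₂
    exact Submodule.subset_span ⟨_, single_mem_basisSpan.2 hw₁, _, single_mem_basisSpan.2 hw₂,
      (wordMul_single_castAdd_natAdd w).symm⟩

end Words

section Blocks

variable {α : Type*}

def block (x : ℤ → α) (p : ℤ) (N : ℕ) : List α :=
  ofFn fun i : Fin N => x (p + i)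

variable {x y : ℤ → α} {p q : ℤ} {N : ℕ}

@[simp]
theorem length_block : (block x p N).length = N := length_ofFn

theorem block_add (x : ℤ → α) (p : ℤ) (m n : ℕ) :
    block x p (m + n) = block x p m ++ block x (p + m) n := by
  simp [block, List.ofFn_add, add_assoc]

theorem block_one : block x p 1 = [x p] := by simp [block]

theorem block_comp_add (c : ℤ) : block (fun j => x (j + c)) p N = block x (p + c) N := by
  simp [block, add_right_comm]

theorem block_congr (h : ∀ i : ℕ, i < N → x (p + i) = y (p + i)) : block x p N = block y p N :=
  List.ofFn_inj.2 (funext fun i => h i i.2)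

theorem apply_eq_of_block_eq (h : block x p N = block y p N) {j : ℤ} (hpj : p ≤ j)
    (hjN : j < p + N) : x j = y j := by
  have hj : p + ((j - p).toNat : ℕ) = j := by omega
  have := congrFun (List.ofFn_inj.1 h) ⟨(j - p).toNat, by omega⟩
  simp only at this
  rwa [hj] at this

theorem block_eq_of_eq_append {s u t : List α} (h : block x p N = s ++ u ++ t) :
    block x (p + s.length) u.length = u := by
  obtain rfl : N = s.length + u.length + t.length := by simpa [add_assoc] using congrArg List.length h
  rw [block_add, block_add] at h
  exact (List.append_inj (List.append_inj h (by simp)).1 (by simp)).2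

theorem block_infix_block {M : ℕ} (hqp : q ≤ p) (hpN : p + N ≤ q + M) :
    block x p N <:+: block x q M := by
  obtain ⟨a, rfl⟩ : ∃ a : ℕ, p = q + a := ⟨(p - q).toNat, by omega⟩
  obtain ⟨c, rfl⟩ : ∃ c : ℕ, M = a + N + c := ⟨M - a - N, by omega⟩
  rw [block_add, block_add]
  exact ⟨_, _, rfl⟩

theorem block_getD (u : List α) (a : α) (p : ℤ) :
    block (fun j => u.getD (j - p).toNat a) p u.length = u := by
  refine List.ext_getElem (by simp) fun i h _ => ?_
  simp [block]

end Blocks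

section Subshift

variable {d : ℕ} {x : ℤ → Fin d} {l u : List (Fin d)}

theorem occursIn_iff_exists_block : OccursIn l x ↔ ∃ p, block x p l.length = l := by
  refine exists_congr fun p => ?_
  have h : block x p l.length = l ↔ (fun i : Fin l.length => x (p + (i : ℕ))) = l.get :=
    (Eq.congr_right (List.ofFn_get l).symm).trans List.ofFn_inj
  rw [h, funext_iff]

theorem OccursIn.of_infix (h : OccursIn l x) (hu : u <:+: l) : OccursIn u x := by
  obtain ⟨s, t, rfl⟩ := hu
  obtain ⟨p, hp⟩ := occursIn_iff_exists_block.1 h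
  exact occursIn_iff_exists_block.2 ⟨_, block_eq_of_eq_append hp⟩

theorem occursIn_comp_add (c : ℤ) : OccursIn l (fun j => x (j + c)) ↔ OccursIn l x := by
  simp only [occursIn_iff_exists_block, block_comp_add]
  exact ⟨fun ⟨p, hp⟩ => ⟨p + c, hp⟩, fun ⟨p, hp⟩ => ⟨p - c, by rwa [sub_add_cancel]⟩⟩

theorem occursIn_or_occursIn_of_occursIn_piecewise {x y : ℤ → Fin d} {p : ℤ} {N : ℕ}
    (hxy : block x p N = block y p N) {v : List (Fin d)} (hv : v.length ≤ N + 1)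
    (h : OccursIn v fun j => if j < p + N then x j else y j) : OccursIn v x ∨ OccursIn v y := by
  obtain ⟨q, hq⟩ := occursIn_iff_exists_block.1 h
  by_cases hqv : q + v.length ≤ p + N
  · refine .inl (occursIn_iff_exists_block.2 ⟨q, (block_congr fun i hi => ?_).trans hq⟩)
    exact (if_pos (by omega)).symm
  · refine .inr (occursIn_iff_exists_block.2 ⟨q, (block_congr fun i hi => ?_).trans hq⟩)
    split_ifs with hj
    · exact (apply_eq_of_block_eq hxy (by omega) hj).symm
    · rfl

def subshiftOf (ℒ : Set (List (Fin d))) : Set (ℤ → Fin d) :=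
  {x | ∀ l, OccursIn l x → l ∈ ℒ}

variable {ℒ : Set (List (Fin d))}

theorem mem_subshiftOf_iff_block_mem : x ∈ subshiftOf ℒ ↔ ∀ p N, block x p N ∈ ℒ :=
  ⟨fun hx p N => hx _ (occursIn_iff_exists_block.2 ⟨p, by simp⟩),
    fun hx l hl => by obtain ⟨p, hp⟩ := occursIn_iff_exists_block.1 hl; exact hp ▸ hx p _⟩

theorem comp_add_mem_subshiftOf (hx : x ∈ subshiftOf ℒ) (c : ℤ) :
    (fun j => x (j + c)) ∈ subshiftOf ℒ :=
  fun l hl => hx l ((occursIn_comp_add c).1 hl)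

theorem shiftSeq_image_subshiftOf (ℒ : Set (List (Fin d))) :
    shiftSeq '' subshiftOf ℒ = subshiftOf ℒ := by
  refine subset_antisymm ?_ fun y hy => ⟨_, comp_add_mem_subshiftOf hy (-1), ?_⟩
  · rintro _ ⟨x, hx, rfl⟩
    exact comp_add_mem_subshiftOf hx 1
  · funext j
    simp [shiftSeq]

theorem isClosed_setOf_block_mem (p : ℤ) (N : ℕ) (S : Set (List (Fin d))) :
    IsClosed {x : ℤ → Fin d | block x p N ∈ S} := by
  have hcont : Continuous fun (x : ℤ → Fin d) (i : Fin N) => x (p + (i : ℕ)) :=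
    continuous_pi fun i => continuous_apply _
  exact (isClosed_discrete {f : Fin N → Fin d | ofFn f ∈ S}).preimage hcont

theorem isClosed_subshiftOf (ℒ : Set (List (Fin d))) : IsClosed (subshiftOf ℒ) := by
  have h : subshiftOf ℒ = ⋂ (p : ℤ) (N : ℕ), {x | block x p N ∈ ℒ} := by
    ext x
    simp [mem_subshiftOf_iff_block_mem]
  rw [h]
  exact isClosed_iInter fun p => isClosed_iInter fun N => isClosed_setOf_block_mem p N ℒ

end Subshift

structure IsSubshiftLanguage {α : Type*} (ℒ : Set (List α)) : Prop where
  nil_mem : [] ∈ ℒ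
  mem_of_append_mem {u v : List α} : u ++ v ∈ ℒ → u ∈ ℒ ∧ v ∈ ℒ
  exists_cons_mem {l : List α} : l ∈ ℒ → ∃ a, a :: l ∈ ℒ
  exists_append_singleton_mem {l : List α} : l ∈ ℒ → ∃ a, l ++ [a] ∈ ℒ

def IsKStepLanguage {α : Type*} (k : ℕ) (ℒ : Set (List α)) : Prop :=
  ∀ l : List α, k + 1 < l.length → (l ∈ ℒ ↔ l.dropLast ∈ ℒ ∧ l.tail ∈ ℒ)

namespace IsSubshiftLanguage

section Generic

variable {α : Type*} {ℒ : Set (List α)} (hℒ : IsSubshiftLanguage ℒ) {l u : List α}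
include hℒ

theorem mem_of_infix (hl : l ∈ ℒ) (hu : u <:+: l) : u ∈ ℒ := by
  obtain ⟨s, t, rfl⟩ := hu
  exact (hℒ.mem_of_append_mem (hℒ.mem_of_append_mem hl).1).2

theorem exists_append_append_mem (hl : l ∈ ℒ) (m : ℕ) :
    ∃ s t : List α, s.length = m ∧ t.length = m ∧ s ++ l ++ t ∈ ℒ := by
  induction m with
  | zero => exact ⟨[], [], rfl, rfl, by simpa using hl⟩
  | succ m ih =>
    obtain ⟨s, t, hs, ht, hst⟩ := ih
    obtain ⟨a, ha⟩ := hℒ.exists_cons_mem hst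
    obtain ⟨b, hb⟩ := hℒ.exists_append_singleton_mem ha
    exact ⟨a :: s, t ++ [b], by simp [hs], by simp [ht], by simpa using hb⟩

theorem forall_take_drop_mem_iff (l : List α) :
    (∀ i, 0 < i → i < l.length → l.take i ∈ ℒ ∧ l.drop i ∈ ℒ) ↔ l.dropLast ∈ ℒ ∧ l.tail ∈ ℒ := by
  constructor
  · intro h
    by_cases hl : 2 ≤ l.length
    · rw [List.dropLast_eq_take, ← List.drop_one]
      exact ⟨(h _ (by omega) (by omega)).1, (h 1 (by omega) (by omega)).2⟩
    · have hnil (u : List α) (hu : u.length = 0) : u ∈ ℒ :=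
        List.length_eq_zero_iff.1 hu ▸ hℒ.nil_mem
      exact ⟨hnil _ (by simp; omega), hnil _ (by simp; omega)⟩
  · rintro ⟨hinit, htail⟩ i hi hil
    rw [List.dropLast_eq_take] at hinit
    rw [← List.drop_one] at htail
    exact ⟨hℒ.mem_of_infix hinit (List.take_prefix_take_left (by omega)).isInfix,
      hℒ.mem_of_infix htail (List.drop_suffix_drop_left l hi).isInfix⟩

end Generic

variable {d k : ℕ} {ℒ : Set (List (Fin d))} (hℒ : IsSubshiftLanguage ℒ) {l : List (Fin d)}
include hℒ

theorem exists_mem_subshiftOf_block_eq (hl : l ∈ ℒ) (p : ℤ) :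
    ∃ x ∈ subshiftOf ℒ, block x p l.length = l := by
  -- a letter to pad finite words into points
  obtain ⟨a, -⟩ := hℒ.exists_cons_mem hℒ.nil_mem
  let D : ℕ → Set (ℤ → Fin d) := fun m =>
    {x | block x (p - m) (m + l.length + m) ∈ ℒ} ∩ {x | block x p l.length = l}
  have hD_closed (m : ℕ) : IsClosed (D m) :=
    (isClosed_setOf_block_mem _ _ ℒ).inter (isClosed_setOf_block_mem _ _ {l})
  have hD_anti (m : ℕ) : D (m + 1) ⊆ D m := fun x hx =>
    ⟨hℒ.mem_of_infix hx.1 (block_infix_block (by omega) (by omega)), hx.2⟩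
  have hD_nonempty (m : ℕ) : (D m).Nonempty := by
    obtain ⟨s, t, rfl, ht, hmem⟩ := hℒ.exists_append_append_mem hl m
    have hblock := block_getD (s ++ l ++ t) a (p - s.length)
    rw [List.length_append, List.length_append, ht] at hblock
    refine ⟨_, by rwa [← hblock] at hmem, ?_⟩
    simpa using block_eq_of_eq_append hblock
  obtain ⟨x, hx⟩ := IsCompact.nonempty_iInter_of_sequence_nonempty_isCompact_isClosed D hD_anti
    hD_nonempty (hD_closed 0).isCompact hD_closed
  rw [Set.mem_iInter] at hx
  refine ⟨x, mem_subshiftOf_iff_block_mem.2 fun q N => ?_, (hx 0).2⟩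
  exact hℒ.mem_of_infix (hx ((q - p).natAbs + N)).1 (block_infix_block (by omega) (by omega))

theorem lang_subshiftOf : lang (subshiftOf ℒ) = ℒ := by
  refine subset_antisymm (fun l ⟨x, hx, hl⟩ => hx l hl) fun l hl => ?_
  obtain ⟨x, hx, hxl⟩ := hℒ.exists_mem_subshiftOf_block_eq hl 0
  exact ⟨x, hx, occursIn_iff_exists_block.2 ⟨0, hxl⟩⟩

theorem nonempty_subshiftOf : (subshiftOf ℒ).Nonempty := by
  obtain ⟨x, hx, -⟩ := hℒ.exists_mem_subshiftOf_block_eq hℒ.nil_mem 0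
  exact ⟨x, hx⟩

theorem isKStepSFT_subshiftOf_of_isKStepLanguage (hk : IsKStepLanguage k ℒ) :
    IsKStepSFT k (subshiftOf ℒ) := by
  refine ⟨{l | l ≠ [] ∧ l.length ≤ k + 1 ∧ l ∉ ℒ},
    (List.finite_length_le _ _).subset fun l hl => hl.2.1, fun l hl => ⟨hl.1, hl.2.1⟩, ?_⟩
  refine subset_antisymm (fun x hx l hl hocc => hl.2.2 (hx l hocc)) fun x hx => ?_
  suffices ∀ n l, l.length = n → OccursIn l x → l ∈ ℒ from fun l => this _ l rfl
  intro n
  induction n using Nat.strong_induction_on with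
  | _ n ih =>
    intro l hln hl
    by_cases hnil : l = []
    · exact hnil ▸ hℒ.nil_mem
    by_cases hlk : l.length ≤ k + 1
    · by_contra hnot
      exact hx l ⟨hnil, hlk, hnot⟩ hl
    · refine (hk l (by omega)).2 ⟨ih _ ?_ _ rfl (hl.of_infix (List.dropLast_prefix l).isInfix),
        ih _ ?_ _ rfl (hl.of_infix (List.tail_suffix l).isInfix)⟩ <;> simp <;> omega

theorem cons_append_singleton_mem_of_isKStepSFT (h : IsKStepSFT k (subshiftOf ℒ)) {a b : Fin d}
    {u : List (Fin d)} (hu : k ≤ u.length) (hinit : a :: u ∈ ℒ) (htail : u ++ [b] ∈ ℒ) :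
    a :: (u ++ [b]) ∈ ℒ := by
  obtain ⟨W, -, hW, hΛ⟩ := h
  obtain ⟨x, hx, hxl⟩ := hℒ.exists_mem_subshiftOf_block_eq hinit 0
  obtain ⟨y, hy, hyl⟩ := hℒ.exists_mem_subshiftOf_block_eq htail 1
  have hxu : block x 1 u.length = u := by
    have h := block_eq_of_eq_append (s := [a]) (t := []) (by simpa using hxl)
    rwa [List.length_singleton, Nat.cast_one, zero_add] at h
  have hyu : block y 1 u.length = u := by
    simpa using block_eq_of_eq_append (s := []) (t := [b]) (by simpa using hyl)
  have hyb : y (1 + u.length) = b := by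
    have h := block_eq_of_eq_append (s := u) (u := [b]) (t := []) (by simpa using hyl)
    rw [List.length_singleton, block_one] at h
    exact List.singleton_inj.1 h
  -- `x` and `y` agree on `[1, |u|]` and `k ≤ |u|`, so every window of `z` of length at most
  -- `k + 1` is a window of `x` or of `y`
  let z : ℤ → Fin d := fun j => if j < 1 + u.length then x j else y j
  have hz : z ∈ subshiftOf ℒ := by
    rw [hΛ] at hx hy ⊢
    intro w hw hocc
    rcases occursIn_or_occursIn_of_occursIn_piecewise (hxu.trans hyu.symm)
      (by have := (hW w hw).2; omega) hocc with h | h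
    exacts [hx w hw h, hy w hw h]
  have hzl : block z 0 (a :: (u ++ [b])).length = a :: (u ++ [b]) := by
    have hzx : block z 0 (u.length + 1) = block x 0 (u.length + 1) :=
      block_congr fun i hi => if_pos (by omega)
    have hzb : z (0 + ((u.length + 1 : ℕ) : ℤ)) = b := by
      rw [← hyb]
      exact if_neg (by omega) |>.trans (congrArg y (by omega))
    rw [show (a :: (u ++ [b])).length = (u.length + 1) + 1 by simp, block_add, block_one, hzx,
      show block x 0 (u.length + 1) = a :: u by simpa using hxl, hzb]
    simp
  exact hz _ (occursIn_iff_exists_block.2 ⟨0, hzl⟩)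

theorem isKStepLanguage_of_isKStepSFT (h : IsKStepSFT k (subshiftOf ℒ)) :
    IsKStepLanguage k ℒ := by
  intro l hl
  refine ⟨fun hmem => ⟨hℒ.mem_of_infix hmem (List.dropLast_prefix l).isInfix,
    hℒ.mem_of_infix hmem (List.tail_suffix l).isInfix⟩, fun ⟨hinit, htail⟩ => ?_⟩
  obtain ⟨a, l', rfl⟩ := List.exists_cons_of_ne_nil (List.ne_nil_of_length_pos (l := l) (by omega))
  obtain ⟨u, b, rfl⟩ : ∃ u b, l' = u ++ [b] := by
    obtain ⟨u, b, h⟩ := (List.eq_nil_or_concat l').resolve_left (by rintro rfl; simp at hl)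
    exact ⟨u, b, by simpa using h⟩
  rw [List.dropLast_cons_of_ne_nil (by simp), List.dropLast_concat] at hinit
  rw [List.tail_cons] at htail
  exact hℒ.cons_append_singleton_mem_of_isKStepSFT h (by simp at hl; omega) hinit htail

theorem isKStepSFT_subshiftOf_iff : IsKStepSFT k (subshiftOf ℒ) ↔ IsKStepLanguage k ℒ :=
  ⟨hℒ.isKStepLanguage_of_isKStepSFT, hℒ.isKStepSFT_subshiftOf_of_isKStepLanguage⟩

end IsSubshiftLanguage

theorem exists_language_eq_basisSpan {R α : Type*} [Semiring R] [Nontrivial R] [Finite α]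
    [DecidableEq α] {X : (n : ℕ) → Submodule R ((Fin n → α) → R)}
    (hX : ∀ n, ∃ A : Set (Fin n → α), X n = basisSpan A) :
    ∃ ℒ : Set (List α), ∀ n, X n = basisSpan {w : Fin n → α | ofFn w ∈ ℒ} := by
  refine ⟨{l | ∃ n, ∃ w : Fin n → α, Pi.single w 1 ∈ X n ∧ ofFn w = l}, fun n => ?_⟩
  obtain ⟨A, hA⟩ := hX n
  rw [hA]
  congr 1
  ext w
  rw [← single_mem_basisSpan (R := R), ← hA]
  refine ⟨fun h => ⟨n, w, h, rfl⟩, ?_⟩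
  rintro ⟨m, v, hv, hvw⟩
  obtain ⟨rfl, hvw⟩ := Sigma.mk.inj_iff.1 (List.ofFn_inj'.1 hvw)
  rwa [← eq_of_heq hvw]

section SubproductSystem

variable {d : ℕ} {X : (n : ℕ) → Submodule ℂ ((Fin n → Fin d) → ℂ)} {ℒ : Set (List (Fin d))}

def IsMaximalAbove (k : ℕ) (X : (n : ℕ) → Submodule ℂ ((Fin n → Fin d) → ℂ)) : Prop :=
  ∀ n : ℕ, k + 1 < n → ∀ f : (Fin n → Fin d) → ℂ,
    (f ∈ X n ↔ ∀ (i j : ℕ) (hij : i + j = n), 1 ≤ i → 1 ≤ j →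
      (castWords hij).symm f ∈ prodSpan (X i) ⊤ ⊓ prodSpan ⊤ (X j))

variable (hX : ∀ n, X n = basisSpan {w : Fin n → Fin d | ofFn w ∈ ℒ})
include hX

theorem single_mem_iff_ofFn_mem {n : ℕ} {w : Fin n → Fin d} :
    Pi.single w (1 : ℂ) ∈ X n ↔ ofFn w ∈ ℒ := by
  rw [hX]
  exact single_mem_basisSpan

theorem isSubshiftLanguage_of_eq_basisSpan (hX0 : X 0 = ⊤)
    (hXsub : ∀ m n : ℕ, X (m + n) ≤ prodSpan (X m) (X n))
    (hext : ∀ n : ℕ, ∀ α : Fin n → Fin d, Pi.single α (1 : ℂ) ∈ X n →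
      ∃ β γ : Fin 1 → Fin d,
        Pi.single (Fin.append β α) (1 : ℂ) ∈ X (1 + n) ∧
        Pi.single (Fin.append α γ) (1 : ℂ) ∈ X (n + 1)) :
    IsSubshiftLanguage ℒ := by
  have hget {l : List (Fin d)} : Pi.single l.get (1 : ℂ) ∈ X l.length ↔ l ∈ ℒ := by
    rw [single_mem_iff_ofFn_mem hX, List.ofFn_get]
  refine ⟨?_, fun {u v} huv => ?_, fun {l} hl => ?_, fun {l} hl => ?_⟩
  · simpa using (single_mem_iff_ofFn_mem hX).1 (hX0 ▸ Submodule.mem_top :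
      Pi.single (Fin.elim0 : Fin 0 → Fin d) (1 : ℂ) ∈ X 0)
  · have hw : ofFn (Fin.append u.get v.get) = u ++ v := by simp
    have hmem := hXsub _ _ ((single_mem_iff_ofFn_mem hX).2 (hw ▸ huv))
    rw [hX, hX, prodSpan_basisSpan, single_mem_basisSpan, Set.mem_ofPred_eq, hw,
      List.take_left' rfl, List.drop_left' rfl] at hmem
    exact hmem
  · obtain ⟨β, -, hβ, -⟩ := hext _ _ (hget.2 hl)
    exact ⟨β 0, by simpa using (single_mem_iff_ofFn_mem hX).1 hβ⟩
  · obtain ⟨-, γ, -, hγ⟩ := hext _ _ (hget.2 hl)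
    have h := (single_mem_iff_ofFn_mem hX).1 hγ
    rw [List.ofFn_fin_append, List.ofFn_get] at h
    exact ⟨γ 0, by simpa using h⟩

theorem castWords_symm_mem_prodSpan_inf_iff {i j n : ℕ} (hij : i + j = n)
    (f : (Fin n → Fin d) → ℂ) :
    (castWords hij).symm f ∈ prodSpan (X i) ⊤ ⊓ prodSpan ⊤ (X j) ↔
      ∀ w, f w ≠ 0 → (ofFn w).take i ∈ ℒ ∧ (ofFn w).drop i ∈ ℒ := by
  subst hij
  have htop (m : ℕ) : (⊤ : Submodule ℂ ((Fin m → Fin d) → ℂ)) =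
      basisSpan {v : Fin m → Fin d | ofFn v ∈ (Set.univ : Set (List (Fin d)))} := by
    simp [basisSpan_univ]
  rw [hX, hX, htop, htop, prodSpan_basisSpan, prodSpan_basisSpan, Submodule.mem_inf,
    mem_basisSpan, mem_basisSpan]
  simp only [Set.mem_ofPred_eq, Set.mem_univ, and_true, true_and, ← forall_and]
  rfl

theorem isMaximalAbove_iff (hℒ : IsSubshiftLanguage ℒ) (k : ℕ) :
    IsMaximalAbove k X ↔ IsKStepLanguage k ℒ := by
  have hsplit (n : ℕ) (f : (Fin n → Fin d) → ℂ) :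
      (∀ (i j : ℕ) (hij : i + j = n), 1 ≤ i → 1 ≤ j →
        (castWords hij).symm f ∈ prodSpan (X i) ⊤ ⊓ prodSpan ⊤ (X j)) ↔
      f ∈ basisSpan {w : Fin n → Fin d | (ofFn w).dropLast ∈ ℒ ∧ (ofFn w).tail ∈ ℒ} := by
    simp_rw [castWords_symm_mem_prodSpan_inf_iff hX, mem_basisSpan, Set.mem_ofPred_eq,
      ← hℒ.forall_take_drop_mem_iff, List.length_ofFn]
    exact ⟨fun h w hw i hi hin => h i (n - i) (by omega) hi (by omega) w hw,
      fun h i j hij hi hj w hw => h w hw i hi (by omega)⟩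
  have hfiber (n : ℕ) :
      (∀ f, f ∈ X n ↔ ∀ (i j : ℕ) (hij : i + j = n), 1 ≤ i → 1 ≤ j →
        (castWords hij).symm f ∈ prodSpan (X i) ⊤ ⊓ prodSpan ⊤ (X j)) ↔
      ∀ w : Fin n → Fin d, ofFn w ∈ ℒ ↔ (ofFn w).dropLast ∈ ℒ ∧ (ofFn w).tail ∈ ℒ := by
    simp_rw [hsplit, ← SetLike.ext_iff, hX n, basisSpan_injective.eq_iff, Set.ext_iff,
      Set.mem_ofPred_eq]
  rw [IsMaximalAbove, IsKStepLanguage, List.forall_iff_forall_tuple]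
  simp_rw [hfiber, List.length_ofFn, imp_forall_iff]

end SubproductSystem

theorem stmt7_general (d k : ℕ)
    (X : (n : ℕ) → Submodule ℂ ((Fin n → Fin d) → ℂ))
    (hX0 : X 0 = ⊤)
    (hXsub : ∀ m n : ℕ, X (m + n) ≤ prodSpan (X m) (X n))
    (h1 : ∀ n : ℕ, 1 ≤ n → ∃ A : Set (Fin n → Fin d),
      X n = Submodule.span ℂ ((fun w => Pi.single w (1 : ℂ)) '' A))
    (h2 : ∀ m n : ℕ, ∀ α : Fin n → Fin d, Pi.single α (1 : ℂ) ∈ X n →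
      ∃ β γ : Fin m → Fin d,
        Pi.single (Fin.append β α) (1 : ℂ) ∈ X (m + n) ∧
        Pi.single (Fin.append α γ) (1 : ℂ) ∈ X (n + m)) :
    ∃ Λ : Set (ℤ → Fin d),
      Λ.Nonempty ∧ IsClosed Λ ∧ shiftSeq '' Λ = Λ ∧
      (∀ n : ℕ, 1 ≤ n →
        X n = Submodule.span ℂ
          ((fun w => Pi.single w (1 : ℂ)) '' {w : Fin n → Fin d | List.ofFn w ∈ lang Λ})) ∧
      ((∀ n : ℕ, k + 1 < n → ∀ f : (Fin n → Fin d) → ℂ,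
          (f ∈ X n ↔ ∀ (i j : ℕ) (hij : i + j = n), 1 ≤ i → 1 ≤ j →
            (castWords hij).symm f ∈ prodSpan (X i) ⊤ ⊓ prodSpan ⊤ (X j))) ↔
        IsKStepSFT k Λ) := by
  have hbasis (n : ℕ) : ∃ A : Set (Fin n → Fin d), X n = basisSpan A := by
    rcases Nat.eq_zero_or_pos n with rfl | hn
    · exact ⟨Set.univ, hX0.trans basisSpan_univ.symm⟩
    · exact h1 n hn
  obtain ⟨ℒ, hX⟩ := exists_language_eq_basisSpan hbasis
  have hℒ : IsSubshiftLanguage ℒ :=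
    isSubshiftLanguage_of_eq_basisSpan hX hX0 hXsub fun n => h2 1 n
  refine ⟨subshiftOf ℒ, hℒ.nonempty_subshiftOf, isClosed_subshiftOf ℒ,
    shiftSeq_image_subshiftOf ℒ, fun n _ => ?_, ?_⟩
  · rw [hℒ.lang_subshiftOf]
    exact hX n
  · exact (isMaximalAbove_iff hX hℒ k).trans hℒ.isKStepSFT_subshiftOf_iff.symm

/-- **Standard subproduct systems spanned by words come from subshifts.**
A standard subproduct system over `ℂ^d` whose fibers are spanned by basis vectors `e_w`,
and whose admissible words extend on both sides, is of the form `X_Λ` for a subshift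
`Λ ⊆ {1,…,d}^ℤ`; and it is the maximal standard subproduct system with prescribed fibers
`X(1), …, X(k+1)` if and only if `Λ` is a `k`-step subshift of finite type. -/
theorem stmt7 (d k : ℕ) (hd : 1 ≤ d)
    (X : (n : ℕ) → Submodule ℂ ((Fin n → Fin d) → ℂ))
    (hX0 : X 0 = ⊤)
    (hXsub : ∀ m n : ℕ, X (m + n) ≤ prodSpan (X m) (X n))
    (h1 : ∀ n : ℕ, 1 ≤ n → ∃ A : Set (Fin n → Fin d),
      X n = Submodule.span ℂ ((fun w => Pi.single w (1 : ℂ)) '' A))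
    (h2 : ∀ m n : ℕ, ∀ α : Fin n → Fin d, Pi.single α (1 : ℂ) ∈ X n →
      ∃ β γ : Fin m → Fin d,
        Pi.single (Fin.append β α) (1 : ℂ) ∈ X (m + n) ∧
        Pi.single (Fin.append α γ) (1 : ℂ) ∈ X (n + m)) :
    ∃ Λ : Set (ℤ → Fin d),
      Λ.Nonempty ∧ IsClosed Λ ∧ shiftSeq '' Λ = Λ ∧
      (∀ n : ℕ, 1 ≤ n →
        X n = Submodule.span ℂ
          ((fun w => Pi.single w (1 : ℂ)) '' {w : Fin n → Fin d | List.ofFn w ∈ lang Λ})) ∧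
      ((∀ n : ℕ, k + 1 < n → ∀ f : (Fin n → Fin d) → ℂ,
          (f ∈ X n ↔ ∀ (i j : ℕ) (hij : i + j = n), 1 ≤ i → 1 ≤ j →
            (castWords hij).symm f ∈ prodSpan (X i) ⊤ ⊓ prodSpan ⊤ (X j))) ↔
        IsKStepSFT k Λ) :=
  stmt7_general d k X hX0 hXsub h1 h2
end
end

section
/- Fix d ≥ 1. For n ∈ ℕ let V_n be the complex inner-product space of functions from words of length n over {1,…,d} to ℂ with orthonormal basis (e_w), and for subspaces A ⊆ V_m, B ⊆ V_n let A·B ⊆ V_{m+n} be the span of the concatenation products (e_u·e_v := e_{uv}). Call a family X = (X(n))_{n∈ℕ} of subspaces X(n) ⊆ V_n with X(0) = V_0 and X(m+n) ⊆ X(m)·X(n) for all m, n a standard subproduct system over ℂ^d. For a homogeneous polynomial p = Σ_α c_α x^α of degree n in ℂ⟨x₁,…,x_d⟩ let p̂ := Σ_α c_α e_α ∈ V_n be its coefficient vector. Then the assignments I ↦ X_I, where X_I(n) := the orthogonal complement in V_n of {p̂ : p ∈ I homogeneous of degree n}, and X ↦ I^X, where I^X := the linear span of {p : p homogeneous of some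 degree n ≥ 1 with p̂ orthogonal to X(n)}, are mutually inverse bijections between the set of proper homogeneous two-sided ideals of ℂ⟨x₁,…,x_d⟩ and the set of standard subproduct systems over ℂ^d. In particular, I^X is a proper homogeneous two-sided ideal for every standard subproduct system X; and the bijection is inclusion-reversing: I ⊆ J if and only if X_J(n) ⊆ X_I(n) for all n. -/
noncomputable section

/-- The free (noncommutative polynomial) algebra `ℂ⟨x₁,…,x_d⟩`, realized as the monoid
algebra of the free monoid on `d` generators. -/
abbrev FreeAlg (d : ℕ) : Type := MonoidAlgebra ℂ (FreeMonoid (Fin d))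

/-- `p` is homogeneous of degree `n`: it is supported on monomials indexed by words of
length `n`. -/
def IsHomog {d : ℕ} (n : ℕ) (p : FreeAlg d) : Prop :=
  ∀ w ∈ p.coeff.support, FreeMonoid.length w = n

/-- The homogeneous component of degree `n` of a noncommutative polynomial. -/
def homogComp {d : ℕ} (n : ℕ) (p : FreeAlg d) : FreeAlg d :=
  MonoidAlgebra.ofCoeff (Finsupp.filter (fun w : FreeMonoid (Fin d) => FreeMonoid.length w = n) p.coeff)

/-- A two-sided ideal is homogeneous if it contains every homogeneous component of each of
its elements. -/
def IsHomogIdeal {d : ℕ} (I : TwoSidedIdeal (FreeAlg d)) : Prop :=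
  ∀ p ∈ I, ∀ n : ℕ, homogComp n p ∈ I

/-- The coefficient vector `p̂ ∈ V_n` of a polynomial, `V_n` being the Hilbert space of
functions from length-`n` words to `ℂ`. -/
def coefVec {d : ℕ} (n : ℕ) (p : FreeAlg d) : EuclideanSpace ℂ (Fin n → Fin d) :=
  WithLp.toLp 2 (fun w => p.coeff (FreeMonoid.ofList (List.ofFn w)))

/-- The bilinear concatenation product determined by `e_u ⋆ e_v = e_{uv}`. -/
def wordMulE {d m n : ℕ} (f : EuclideanSpace ℂ (Fin m → Fin d))
    (g : EuclideanSpace ℂ (Fin n → Fin d)) : EuclideanSpace ℂ (Fin (m + n) → Fin d) :=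
  WithLp.toLp 2 (fun w => f (fun i => w (Fin.castAdd n i)) * g (fun j => w (Fin.natAdd m j)))

/-- `A·B`: the span of the concatenation products of elements of `A` and `B`. -/
def prodSpanE {d m n : ℕ} (A : Submodule ℂ (EuclideanSpace ℂ (Fin m → Fin d)))
    (B : Submodule ℂ (EuclideanSpace ℂ (Fin n → Fin d))) :
    Submodule ℂ (EuclideanSpace ℂ (Fin (m + n) → Fin d)) :=
  Submodule.span ℂ {x | ∃ a ∈ A, ∃ b ∈ B, x = wordMulE a b}

/-- The subproduct system `X_I` associated with a homogeneous ideal `I`: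
`X_I(n)` is the orthogonal complement of the coefficient vectors of the degree-`n`
homogeneous elements of `I`. -/
def XofI {d : ℕ} (I : TwoSidedIdeal (FreeAlg d)) (n : ℕ) :
    Submodule ℂ (EuclideanSpace ℂ (Fin n → Fin d)) :=
  (Submodule.span ℂ {v | ∃ p ∈ I, IsHomog n p ∧ v = coefVec n p})ᗮ

/-- The ideal `I^X` associated with a standard subproduct system `X`: the linear span of the
homogeneous polynomials of some degree `n ≥ 1` whose coefficient vector is orthogonal
to `X(n)`. -/
def IofX {d : ℕ} (X : (n : ℕ) → Submodule ℂ (EuclideanSpace ℂ (Fin n → Fin d))) :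
    Submodule ℂ (FreeAlg d) :=
  Submodule.span ℂ {p | ∃ n : ℕ, 1 ≤ n ∧ IsHomog n p ∧ coefVec n p ∈ (X n)ᗮ}

/-!
The coefficient map `p ↦ p̂` identifies homogeneous polynomials of degree `n` with `V_n` and
turns multiplication into the concatenation product, and every polynomial is the sum of its
homogeneous components. Hence a homogeneous ideal `I` is determined by the spaces `Î(n)` of
coefficient vectors of its degree-`n` elements (so `I ⊆ J` iff `Î(n) ⊆ Ĵ(n)` for all `n`), and
`X_I(n) = Î(n)ᗮ`. Being an ideal means `Î(m)·V_n + V_m·Î(n) ⊆ Î(m+n)`, and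
`(A·V_n + V_m·B)ᗮ ⊆ Aᗮ·Bᗮ` gives `X_I(m+n) ⊆ X_I(m)·X_I(n)`. Conversely `X(m+n) ⊆ X(m)·X(n)`
makes `X(m)ᗮ·V_n` and `V_m·X(n)ᗮ` orthogonal to `X(m+n)`, so `I^X` is an ideal, and
`p ∈ I^X` iff the degree-`n` coefficients of `p` are orthogonal to `X(n)` for every `n`
(for `n = 0` this kills the constant term, as `X(0) = V_0`).
-/

namespace FreeAlg

open scoped InnerProductSpace ComplexConjugate

variable {d m n : ℕ}

local notation "V" n => EuclideanSpace ℂ (Fin n → Fin d)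

def word (w : Fin n → Fin d) : FreeMonoid (Fin d) := FreeMonoid.ofList (List.ofFn w)

lemma length_word (w : Fin n → Fin d) : (word w).length = n := List.length_ofFn

lemma word_injective : Function.Injective (word (d := d) (n := n)) := fun u v h => by
  simpa [word] using congrArg FreeMonoid.toList h

lemma exists_word_eq {z : FreeMonoid (Fin d)} (hz : z.length = n) :
    ∃ w : Fin n → Fin d, word w = z := by
  subst hz
  refine ⟨fun i => z.toList.get ⟨i, i.2⟩, ?_⟩
  change FreeMonoid.ofList (List.ofFn z.toList.get) = z
  rw [List.ofFn_get, FreeMonoid.ofList_toList]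

lemma word_append (u : Fin m → Fin d) (v : Fin n → Fin d) :
    word (Fin.append u v) = word u * word v := by
  simp [word, List.ofFn_add, ← FreeMonoid.ofList_append]

lemma coefVec_apply (n : ℕ) (p : FreeAlg d) (w : Fin n → Fin d) :
    coefVec n p w = p.coeff (word w) := rfl

def coefVecL (n : ℕ) : FreeAlg d →ₗ[ℂ] V n where
  toFun := coefVec n
  map_add' p q := by ext; simp [coefVec_apply]
  map_smul' c p := by ext; simp [coefVec_apply]

lemma coefVec_eq_zero_of_isHomog {p : FreeAlg d} (hp : IsHomog m p) (hmn : m ≠ n) :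
    coefVec n p = 0 := by
  ext w
  rw [coefVec_apply, WithLp.ofLp_zero, Pi.zero_apply, ← Finsupp.notMem_support_iff]
  exact fun hw => hmn (hp _ hw ▸ length_word w)

lemma coeff_homogComp (n : ℕ) (p : FreeAlg d) (z : FreeMonoid (Fin d)) :
    (homogComp n p).coeff z = if z.length = n then p.coeff z else 0 := by
  simp [homogComp, Finsupp.filter_apply]

lemma isHomog_homogComp (n : ℕ) (p : FreeAlg d) : IsHomog n (homogComp n p) := fun z hz => by
  by_contra h
  simp [Finsupp.mem_support_iff, coeff_homogComp, h] at hz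

lemma coefVec_homogComp (n : ℕ) (p : FreeAlg d) : coefVec n (homogComp n p) = coefVec n p := by
  ext w
  simp [coefVec_apply, coeff_homogComp, length_word]

lemma exists_sum_homogComp (p : FreeAlg d) :
    ∃ N, ∑ n ∈ Finset.range N, homogComp n p = p := by
  refine ⟨p.coeff.support.sup FreeMonoid.length + 1, ?_⟩
  ext z
  simp only [MonoidAlgebra.coeff_sum, Finsupp.finsetSum_apply, coeff_homogComp]
  by_cases hz : z ∈ p.coeff.support
  · simp [Nat.lt_succ_of_le (Finset.le_sup (f := FreeMonoid.length) hz)]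
  · simp [Finsupp.notMem_support_iff.1 hz]

def polyOfVec (n : ℕ) (v : V n) : FreeAlg d := ∑ w, MonoidAlgebra.single (word w) (v w)

lemma coeff_polyOfVec_word (v : V n) (w : Fin n → Fin d) :
    (polyOfVec n v).coeff (word w) = v w := by
  classical
  simp [polyOfVec, MonoidAlgebra.coeff_sum, Finsupp.finsetSum_apply, MonoidAlgebra.coeff_single,
    Finsupp.single_apply, word_injective.eq_iff]

lemma isHomog_polyOfVec (v : V n) : IsHomog n (polyOfVec n v) := by
  classical
  intro z hz
  rw [polyOfVec, MonoidAlgebra.coeff_sum] at hz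
  obtain ⟨w, -, hw⟩ := Finset.mem_biUnion.1 (Finsupp.support_finsetSum hz)
  rw [Finset.mem_singleton.1 (Finsupp.support_single_subset hw), length_word]

lemma coefVec_polyOfVec (v : V n) : coefVec n (polyOfVec n v) = v := by
  ext w
  exact coeff_polyOfVec_word v w

lemma polyOfVec_coefVec (n : ℕ) (p : FreeAlg d) : polyOfVec n (coefVec n p) = homogComp n p := by
  ext z
  by_cases hz : z.length = n
  · obtain ⟨w, rfl⟩ := exists_word_eq hz
    rw [coeff_polyOfVec_word, coeff_homogComp, if_pos hz, coefVec_apply]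
  · rw [coeff_homogComp, if_neg hz, ← Finsupp.notMem_support_iff]
    exact fun h => hz (isHomog_polyOfVec _ z h)

lemma homogComp_eq_self {p : FreeAlg d} (hp : IsHomog n p) : homogComp n p = p := by
  ext z
  rw [coeff_homogComp]
  split_ifs with hz
  · rfl
  · exact (Finsupp.notMem_support_iff.1 fun h => hz (hp z h)).symm

lemma polyOfVec_coefVec_of_isHomog {p : FreeAlg d} (hp : IsHomog n p) :
    polyOfVec n (coefVec n p) = p := by
  rw [polyOfVec_coefVec, homogComp_eq_self hp]

lemma sum_fin_append {M : Type*} [AddCommMonoid M] (f : (Fin (m + n) → Fin d) → M) :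
    ∑ w, f w = ∑ u : Fin m → Fin d, ∑ v : Fin n → Fin d, f (Fin.append u v) := by
  rw [← Fintype.sum_prod_type']
  exact (Fintype.sum_equiv (Fin.appendEquiv m n) _ _ fun _ => rfl).symm

lemma wordMulE_append (a : V m) (b : V n) (u : Fin m → Fin d) (v : Fin n → Fin d) :
    wordMulE a b (Fin.append u v) = a u * b v := by
  simp [wordMulE]

lemma polyOfVec_mul_polyOfVec (a : V m) (b : V n) :
    polyOfVec m a * polyOfVec n b = polyOfVec (m + n) (wordMulE a b) := by
  simp only [polyOfVec, Finset.sum_mul_sum, MonoidAlgebra.single_mul_single, ← word_append]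
  rw [sum_fin_append]
  simp only [wordMulE_append]

lemma mul_eq_polyOfVec {p q : FreeAlg d} (hp : IsHomog m p) (hq : IsHomog n q) :
    p * q = polyOfVec (m + n) (wordMulE (coefVec m p) (coefVec n q)) := by
  rw [← polyOfVec_mul_polyOfVec, polyOfVec_coefVec_of_isHomog hp, polyOfVec_coefVec_of_isHomog hq]

lemma isHomog_mul {p q : FreeAlg d} (hp : IsHomog m p) (hq : IsHomog n q) :
    IsHomog (m + n) (p * q) := by
  rw [mul_eq_polyOfVec hp hq]
  exact isHomog_polyOfVec _

lemma coefVec_mul {p q : FreeAlg d} (hp : IsHomog m p) (hq : IsHomog n q) :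
    coefVec (m + n) (p * q) = wordMulE (coefVec m p) (coefVec n q) := by
  rw [mul_eq_polyOfVec hp hq, coefVec_polyOfVec]

def wordMulL : (V m) →ₗ[ℂ] (V n) →ₗ[ℂ] V (m + n) :=
  LinearMap.mk₂ ℂ wordMulE
    (fun _ _ _ => by ext; simp [wordMulE, add_mul])
    (fun _ _ _ => by ext; simp [wordMulE, mul_assoc])
    (fun _ _ _ => by ext; simp [wordMulE, mul_add])
    (fun _ _ _ => by ext; simp [wordMulE, mul_left_comm])

lemma prodSpanE_span_span (s : Set (V m)) (t : Set (V n)) :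
    prodSpanE (Submodule.span ℂ s) (Submodule.span ℂ t) =
      Submodule.span ℂ (Set.image2 wordMulE s t) := by
  have h : ∀ (A : Submodule ℂ (V m)) (B : Submodule ℂ (V n)),
      prodSpanE A B = Submodule.map₂ wordMulL A B := fun A B => by
    rw [Submodule.map₂_eq_span_image2, prodSpanE]
    congr 1
    ext x
    simp [wordMulL, eq_comm]
  rw [h, Submodule.map₂_span_span]
  rfl

lemma inner_wordMulE (a c : V m) (b e : V n) :
    ⟪wordMulE a b, wordMulE c e⟫_ℂ = ⟪a, c⟫_ℂ * ⟪b, e⟫_ℂ := by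
  simp only [PiLp.inner_apply, RCLike.inner_apply', Finset.sum_mul_sum]
  rw [sum_fin_append]
  simp only [wordMulE_append, map_mul]
  exact Finset.sum_congr rfl fun _ _ => Finset.sum_congr rfl fun _ _ => by ring

lemma wordMulE_mem_orthogonal {A : Submodule ℂ (V m)} {B : Submodule ℂ (V n)} {a : V m} {b : V n}
    (h : a ∈ Aᗮ ∨ b ∈ Bᗮ) : wordMulE a b ∈ (prodSpanE A B)ᗮ := by
  have : prodSpanE A B ≤ LinearMap.ker (innerₛₗ ℂ (wordMulE a b)) := by
    refine Submodule.span_le.2 ?_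
    rintro _ ⟨c, hc, e, he, rfl⟩
    simpa [inner_wordMulE] using
      h.imp (Submodule.inner_left_of_mem_orthogonal hc) (Submodule.inner_left_of_mem_orthogonal he)
  exact (Submodule.mem_orthogonal' _ _).2 fun x hx => this hx

def sliceLeft (x : V (m + n)) (v : Fin n → Fin d) : V m := WithLp.toLp 2 fun u => x (Fin.append u v)

def sliceRight (x : V (m + n)) (u : Fin m → Fin d) : V n := WithLp.toLp 2 fun v => x (Fin.append u v)

lemma inner_wordMulE_single_right (a : V m) (v : Fin n → Fin d) (x : V (m + n)) :
    ⟪wordMulE a (EuclideanSpace.single v 1), x⟫_ℂ = ⟪a, sliceLeft x v⟫_ℂ := by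
  classical
  simp only [PiLp.inner_apply, RCLike.inner_apply']
  rw [sum_fin_append, Finset.sum_comm, Finset.sum_eq_single v]
  · simp [wordMulE_append, sliceLeft]
  · intro v' _ hv'
    simp [wordMulE_append, hv']
  · simp

lemma inner_wordMulE_single_left (u : Fin m → Fin d) (b : V n) (x : V (m + n)) :
    ⟪wordMulE (EuclideanSpace.single u 1) b, x⟫_ℂ = ⟪b, sliceRight x u⟫_ℂ := by
  classical
  simp only [PiLp.inner_apply, RCLike.inner_apply']
  rw [sum_fin_append, Finset.sum_eq_single u]
  · simp [wordMulE_append, sliceRight]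
  · intro u' _ hu'
    simp [wordMulE_append, hu']
  · simp

/-- Read `x` as the matrix `(u, v) ↦ x (u ++ v)`: its columns lie in `Aᗮ` and its rows in
`Bᗮ`. Expanding the columns in an orthonormal basis `(fᵢ)` of `Aᗮ` gives `x = ∑ᵢ fᵢ ⋆ zᵢ`, where each
`zᵢ` is a linear combination of rows. -/
lemma orthogonal_inf_le_prodSpanE (A : Submodule ℂ (V m)) (B : Submodule ℂ (V n)) :
    (prodSpanE A ⊤)ᗮ ⊓ (prodSpanE ⊤ B)ᗮ ≤ prodSpanE Aᗮ Bᗮ := by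
  rintro x ⟨hxA, hxB⟩
  have hL : ∀ v, sliceLeft x v ∈ Aᗮ := fun v => (Submodule.mem_orthogonal _ _).2 fun a ha => by
    rw [← inner_wordMulE_single_right]
    exact Submodule.inner_right_of_mem_orthogonal
      (Submodule.subset_span ⟨a, ha, _, trivial, rfl⟩ : _ ∈ prodSpanE A ⊤) hxA
  have hR : ∀ u, sliceRight x u ∈ Bᗮ := fun u => (Submodule.mem_orthogonal _ _).2 fun b hb => by
    rw [← inner_wordMulE_single_left]
    exact Submodule.inner_right_of_mem_orthogonal
      (Submodule.subset_span ⟨_, trivial, b, hb, rfl⟩ : _ ∈ prodSpanE ⊤ B) hxB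
  let f := stdOrthonormalBasis ℂ Aᗮ
  let z i : V n := ∑ u, conj ((f i : V m) u) • sliceRight x u
  have hz : ∀ i, z i ∈ Bᗮ := fun i => Submodule.sum_mem _ fun u _ => Submodule.smul_mem _ _ (hR u)
  have hx : x = ∑ i, wordMulE (f i : V m) (z i) := by
    ext w
    obtain ⟨⟨u, v⟩, rfl⟩ : ∃ p : _ × _, Fin.append p.1 p.2 = w :=
      ⟨(_, _), Fin.append_castAdd_natAdd (f := w)⟩
    have hexp := congrArg (fun y : Aᗮ => (y : V m) u) (f.sum_repr' ⟨sliceLeft x v, hL v⟩)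
    calc x (Fin.append u v) = sliceLeft x v u := rfl
      _ = ∑ i, ⟪(f i : V m), sliceLeft x v⟫_ℂ * (f i : V m) u := by
        rw [← hexp]
        simp
      _ = _ := by
        simp only [WithLp.ofLp_sum, Finset.sum_apply, wordMulE_append]
        refine Finset.sum_congr rfl fun i _ => ?_
        simp [z, sliceLeft, sliceRight, PiLp.inner_apply, mul_comm, Finset.mul_sum]
  rw [hx]
  exact Submodule.sum_mem _ fun i _ => Submodule.subset_span ⟨_, (f i).2, _, hz i, rfl⟩

section Ideal

variable {I J : TwoSidedIdeal (FreeAlg d)}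

lemma smul_mem_twoSidedIdeal (c : ℂ) {p : FreeAlg d} (hp : p ∈ I) : c • p ∈ I := by
  rw [Algebra.smul_def]
  exact I.mul_mem_left _ _ hp

def coefSpan (I : TwoSidedIdeal (FreeAlg d)) (n : ℕ) : Submodule ℂ (V n) :=
  Submodule.span ℂ {v | ∃ p ∈ I, IsHomog n p ∧ v = coefVec n p}

lemma XofI_eq_orthogonal (I : TwoSidedIdeal (FreeAlg d)) (n : ℕ) :
    XofI I n = (coefSpan I n)ᗮ := rfl

lemma orthogonal_XofI (I : TwoSidedIdeal (FreeAlg d)) (n : ℕ) :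
    (XofI I n)ᗮ = coefSpan I n :=
  Submodule.orthogonal_orthogonal _

lemma coefSpan_mono (h : ∀ p, p ∈ I → p ∈ J) (n : ℕ) : coefSpan I n ≤ coefSpan J n :=
  Submodule.span_mono fun _ ⟨p, hp, hph, hv⟩ => ⟨p, h p hp, hph, hv⟩

lemma mem_coefSpan_iff (hI : IsHomogIdeal I) {v : V n} :
    v ∈ coefSpan I n ↔ ∃ p ∈ I, coefVec n p = v := by
  constructor
  · intro hv
    induction hv using Submodule.span_induction with
    | mem v hv => obtain ⟨p, hp, -, rfl⟩ := hv; exact ⟨p, hp, rfl⟩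
    | zero => exact ⟨0, I.zero_mem, map_zero (coefVecL n)⟩
    | add v w _ _ hv hw =>
      obtain ⟨p, hp, rfl⟩ := hv
      obtain ⟨q, hq, rfl⟩ := hw
      exact ⟨p + q, I.add_mem hp hq, map_add (coefVecL n) p q⟩
    | smul c v _ hv =>
      obtain ⟨p, hp, rfl⟩ := hv
      exact ⟨c • p, smul_mem_twoSidedIdeal c hp, map_smul (coefVecL n) c p⟩
  · rintro ⟨p, hp, rfl⟩
    exact Submodule.subset_span
      ⟨homogComp n p, hI p hp n, isHomog_homogComp n p, (coefVec_homogComp n p).symm⟩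

lemma mem_iff_forall_coefVec_mem_coefSpan (hI : IsHomogIdeal I) {p : FreeAlg d} :
    p ∈ I ↔ ∀ n, coefVec n p ∈ coefSpan I n := by
  refine ⟨fun hp n => (mem_coefSpan_iff hI).2 ⟨p, hp, rfl⟩, fun h => ?_⟩
  obtain ⟨N, hN⟩ := exists_sum_homogComp p
  rw [← hN]
  refine I.finsetSum_mem _ _ fun n _ => ?_
  obtain ⟨q, hq, hqp⟩ := (mem_coefSpan_iff hI).1 (h n)
  rw [← polyOfVec_coefVec, ← hqp, polyOfVec_coefVec]
  exact hI q hq n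

lemma eq_zero_of_isHomog_zero (hI : (1 : FreeAlg d) ∉ I) {p : FreeAlg d} (hp : p ∈ I)
    (h0 : IsHomog 0 p) : p = 0 := by
  classical
  obtain ⟨c, rfl⟩ : ∃ c : ℂ, p = algebraMap ℂ (FreeAlg d) c := by
    refine ⟨p.coeff 1, ?_⟩
    ext z
    rw [MonoidAlgebra.coe_algebraMap, Function.comp_apply, MonoidAlgebra.coeff_single,
      Finsupp.single_apply]
    split_ifs with hz
    · rw [← hz, Algebra.algebraMap_self, RingHom.id_apply]
    · exact Finsupp.notMem_support_iff.1 fun h => hz (FreeMonoid.length_eq_zero.1 (h0 z h)).symm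
  by_contra hne
  have hc : c ≠ 0 := by rintro rfl; exact hne (map_zero _)
  refine hI ?_
  rw [← map_one (algebraMap ℂ (FreeAlg d)), ← inv_mul_cancel₀ hc, map_mul]
  exact I.mul_mem_left _ _ hp

lemma XofI_zero (hI : (1 : FreeAlg d) ∉ I) : XofI I 0 = ⊤ := by
  rw [XofI_eq_orthogonal, coefSpan, Submodule.span_eq_bot.2, Submodule.bot_orthogonal_eq_top]
  rintro _ ⟨p, hp, hp0, rfl⟩
  rw [eq_zero_of_isHomog_zero hI hp hp0]
  exact map_zero (coefVecL 0)

lemma prodSpanE_coefSpan_top_le (I : TwoSidedIdeal (FreeAlg d)) (m n : ℕ) :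
    prodSpanE (coefSpan I m) ⊤ ≤ coefSpan I (m + n) := by
  rw [coefSpan, ← Submodule.span_univ, prodSpanE_span_span, Submodule.span_le]
  rintro _ ⟨_, ⟨p, hp, hpm, rfl⟩, b, -, rfl⟩
  exact Submodule.subset_span ⟨p * polyOfVec n b, I.mul_mem_right _ _ hp,
    isHomog_mul hpm (isHomog_polyOfVec b),
    by rw [coefVec_mul hpm (isHomog_polyOfVec b), coefVec_polyOfVec]⟩

lemma prodSpanE_top_coefSpan_le (I : TwoSidedIdeal (FreeAlg d)) (m n : ℕ) :
    prodSpanE ⊤ (coefSpan I n) ≤ coefSpan I (m + n) := by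
  rw [coefSpan, ← Submodule.span_univ, prodSpanE_span_span, Submodule.span_le]
  rintro _ ⟨a, -, _, ⟨p, hp, hpn, rfl⟩, rfl⟩
  exact Submodule.subset_span ⟨polyOfVec m a * p, I.mul_mem_left _ _ hp,
    isHomog_mul (isHomog_polyOfVec a) hpn,
    by rw [coefVec_mul (isHomog_polyOfVec a) hpn, coefVec_polyOfVec]⟩

lemma XofI_add_le (I : TwoSidedIdeal (FreeAlg d)) (m n : ℕ) :
    XofI I (m + n) ≤ prodSpanE (XofI I m) (XofI I n) :=
  calc XofI I (m + n) ≤ (prodSpanE (coefSpan I m) ⊤)ᗮ ⊓ (prodSpanE ⊤ (coefSpan I n))ᗮ :=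
        le_inf (Submodule.orthogonal_le (prodSpanE_coefSpan_top_le I m n))
          (Submodule.orthogonal_le (prodSpanE_top_coefSpan_le I m n))
    _ ≤ prodSpanE (XofI I m) (XofI I n) := orthogonal_inf_le_prodSpanE _ _

lemma forall_mem_imp_iff_XofI_le (hI : IsHomogIdeal I) (hJ : IsHomogIdeal J) :
    (∀ p, p ∈ I → p ∈ J) ↔ ∀ n, XofI J n ≤ XofI I n := by
  simp_rw [XofI_eq_orthogonal, Submodule.orthogonal_le_orthogonal_iff]
  refine ⟨coefSpan_mono, fun h p hp => ?_⟩
  rw [mem_iff_forall_coefVec_mem_coefSpan hI] at hp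
  exact (mem_iff_forall_coefVec_mem_coefSpan hJ).2 fun n => h n (hp n)

end Ideal

section SubproductSystem

variable {X : (k : ℕ) → Submodule ℂ (EuclideanSpace ℂ (Fin k → Fin d))}

lemma coefVec_mem_orthogonal_of_mem_IofX {p : FreeAlg d} (hp : p ∈ IofX X) (n : ℕ) :
    coefVec n p ∈ (X n)ᗮ := by
  have : IofX X ≤ (X n)ᗮ.comap (coefVecL n) := by
    refine Submodule.span_le.2 ?_
    rintro q ⟨k, -, hqk, hq⟩
    obtain rfl | hkn := eq_or_ne k n
    · exact hq
    · change coefVec n q ∈ (X n)ᗮ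
      rw [coefVec_eq_zero_of_isHomog hqk hkn]
      exact Submodule.zero_mem _
  exact this hp

lemma homogComp_mem_IofX (hX0 : X 0 = ⊤) {p : FreeAlg d} {n : ℕ}
    (hp : coefVec n p ∈ (X n)ᗮ) : homogComp n p ∈ IofX X := by
  obtain rfl | hn := Nat.eq_zero_or_pos n
  · rw [hX0, Submodule.top_orthogonal_eq_bot, Submodule.mem_bot] at hp
    rw [← polyOfVec_coefVec, hp]
    simp [polyOfVec]
  · exact Submodule.subset_span ⟨n, hn, isHomog_homogComp n p, (coefVec_homogComp n p).symm ▸ hp⟩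

lemma mem_IofX_iff (hX0 : X 0 = ⊤) {p : FreeAlg d} :
    p ∈ IofX X ↔ ∀ n, coefVec n p ∈ (X n)ᗮ := by
  refine ⟨coefVec_mem_orthogonal_of_mem_IofX, fun h => ?_⟩
  obtain ⟨N, hN⟩ := exists_sum_homogComp p
  rw [← hN]
  exact Submodule.sum_mem _ fun n _ => homogComp_mem_IofX hX0 (h n)

lemma mul_mem_IofX (hX : ∀ m n, X (m + n) ≤ prodSpanE (X m) (X n)) {p : FreeAlg d}
    (hp : p ∈ IofX X) (r : FreeAlg d) : p * r ∈ IofX X ∧ r * p ∈ IofX X := by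
  obtain ⟨N, hN⟩ := exists_sum_homogComp r
  have hgen : ∀ q ∈ {q : FreeAlg d | ∃ k, 1 ≤ k ∧ IsHomog k q ∧ coefVec k q ∈ (X k)ᗮ}, ∀ l,
      q * homogComp l r ∈ IofX X ∧ homogComp l r * q ∈ IofX X := by
    rintro q ⟨k, hk, hqk, hq⟩ l
    have hrl := isHomog_homogComp l r
    refine ⟨Submodule.subset_span ⟨k + l, by omega, isHomog_mul hqk hrl, ?_⟩,
      Submodule.subset_span ⟨l + k, by omega, isHomog_mul hrl hqk, ?_⟩⟩
    · rw [coefVec_mul hqk hrl]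
      exact Submodule.orthogonal_le (hX k l) (wordMulE_mem_orthogonal (Or.inl hq))
    · rw [coefVec_mul hrl hqk]
      exact Submodule.orthogonal_le (hX l k) (wordMulE_mem_orthogonal (Or.inr hq))
  have hright : IofX X ≤ (IofX X).comap (LinearMap.mulRight ℂ r) :=
    Submodule.span_le.2 fun q hq => by
      rw [SetLike.mem_coe, Submodule.mem_comap, LinearMap.mulRight_apply, ← hN, Finset.mul_sum]
      exact Submodule.sum_mem _ fun l _ => (hgen q hq l).1
  have hleft : IofX X ≤ (IofX X).comap (LinearMap.mulLeft ℂ r) :=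
    Submodule.span_le.2 fun q hq => by
      rw [SetLike.mem_coe, Submodule.mem_comap, LinearMap.mulLeft_apply, ← hN, Finset.sum_mul]
      exact Submodule.sum_mem _ fun l _ => (hgen q hq l).2
  exact ⟨hright hp, hleft hp⟩

def idealOfIofX (X : (k : ℕ) → Submodule ℂ (EuclideanSpace ℂ (Fin k → Fin d)))
    (hX : ∀ m n, X (m + n) ≤ prodSpanE (X m) (X n)) : TwoSidedIdeal (FreeAlg d) :=
  TwoSidedIdeal.mk' (IofX X) (IofX X).zero_mem (IofX X).add_mem (IofX X).neg_mem
    (fun hy => (mul_mem_IofX hX hy _).2) (fun hx => (mul_mem_IofX hX hx _).1)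

variable (hX : ∀ m n, X (m + n) ≤ prodSpanE (X m) (X n))
include hX

lemma mem_idealOfIofX {p : FreeAlg d} : p ∈ idealOfIofX X hX ↔ p ∈ IofX X :=
  TwoSidedIdeal.mem_mk' _ _ _ _ _ _ p

variable (hX0 : X 0 = ⊤)
include hX0

lemma isHomogIdeal_idealOfIofX : IsHomogIdeal (idealOfIofX X hX) := by
  intro p hp k
  rw [mem_idealOfIofX, mem_IofX_iff hX0] at hp ⊢
  intro n
  obtain rfl | hkn := eq_or_ne k n
  · rw [coefVec_homogComp]
    exact hp k
  · rw [coefVec_eq_zero_of_isHomog (isHomog_homogComp k p) hkn]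
    exact Submodule.zero_mem _

lemma one_notMem_idealOfIofX : (1 : FreeAlg d) ∉ idealOfIofX X hX := by
  rw [mem_idealOfIofX, mem_IofX_iff hX0]
  intro h
  have h0 := h 0
  rw [hX0, Submodule.top_orthogonal_eq_bot, Submodule.mem_bot] at h0
  have := congrArg (fun v : V 0 => v Fin.elim0) h0
  simp [coefVec_apply, word, MonoidAlgebra.one_def] at this

lemma coefSpan_idealOfIofX (n : ℕ) : coefSpan (idealOfIofX X hX) n = (X n)ᗮ := by
  ext v
  rw [mem_coefSpan_iff (isHomogIdeal_idealOfIofX hX hX0)]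
  constructor
  · rintro ⟨p, hp, rfl⟩
    exact coefVec_mem_orthogonal_of_mem_IofX ((mem_idealOfIofX hX).1 hp) n
  · intro hv
    refine ⟨polyOfVec n v, (mem_idealOfIofX hX).2 ((mem_IofX_iff hX0).2 fun k => ?_),
      coefVec_polyOfVec v⟩
    obtain rfl | hnk := eq_or_ne n k
    · rwa [coefVec_polyOfVec]
    · rw [coefVec_eq_zero_of_isHomog (isHomog_polyOfVec v) hnk]
      exact Submodule.zero_mem _

lemma XofI_idealOfIofX (n : ℕ) : XofI (idealOfIofX X hX) n = X n := by
  rw [XofI_eq_orthogonal, coefSpan_idealOfIofX hX hX0, Submodule.orthogonal_orthogonal]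

end SubproductSystem

end FreeAlg

theorem stmt8_general (d : ℕ) :
    (∀ I : TwoSidedIdeal (FreeAlg d), IsHomogIdeal I → (1 : FreeAlg d) ∉ I →
      (XofI I 0 = ⊤ ∧ ∀ m n : ℕ, XofI I (m + n) ≤ prodSpanE (XofI I m) (XofI I n))) ∧
    (∀ X : (n : ℕ) → Submodule ℂ (EuclideanSpace ℂ (Fin n → Fin d)),
      X 0 = ⊤ → (∀ m n : ℕ, X (m + n) ≤ prodSpanE (X m) (X n)) →
      ∃ J : TwoSidedIdeal (FreeAlg d),
        (∀ p : FreeAlg d, p ∈ J ↔ p ∈ IofX X) ∧ IsHomogIdeal J ∧ (1 : FreeAlg d) ∉ J ∧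
        ∀ n : ℕ, XofI J n = X n) ∧
    (∀ I : TwoSidedIdeal (FreeAlg d), IsHomogIdeal I → (1 : FreeAlg d) ∉ I →
      ∀ p : FreeAlg d, p ∈ IofX (XofI I) ↔ p ∈ I) ∧
    (∀ I J : TwoSidedIdeal (FreeAlg d),
      IsHomogIdeal I → (1 : FreeAlg d) ∉ I → IsHomogIdeal J → (1 : FreeAlg d) ∉ J →
      ((∀ p : FreeAlg d, p ∈ I → p ∈ J) ↔ ∀ n : ℕ, XofI J n ≤ XofI I n)) := by
  refine ⟨fun I _ hI1 => ⟨FreeAlg.XofI_zero hI1, FreeAlg.XofI_add_le I⟩,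
    fun X hX0 hX => ?_, fun I hI hI1 p => ?_,
    fun I J hI _ hJ _ => FreeAlg.forall_mem_imp_iff_XofI_le hI hJ⟩
  · exact ⟨FreeAlg.idealOfIofX X hX, fun p => FreeAlg.mem_idealOfIofX hX,
      FreeAlg.isHomogIdeal_idealOfIofX hX hX0, FreeAlg.one_notMem_idealOfIofX hX hX0,
      FreeAlg.XofI_idealOfIofX hX hX0⟩
  · simp_rw [FreeAlg.mem_IofX_iff (FreeAlg.XofI_zero hI1), FreeAlg.orthogonal_XofI,
      ← FreeAlg.mem_iff_forall_coefVec_mem_coefSpan hI]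

/-- **The inclusion-reversing bijection between proper homogeneous two-sided ideals of
`ℂ⟨x₁,…,x_d⟩` and standard subproduct systems over `ℂ^d`**: `I ↦ X_I` and `X ↦ I^X` are
mutually inverse, `I^X` is a proper homogeneous two-sided ideal, and `I ⊆ J` iff
`X_J(n) ⊆ X_I(n)` for all `n`. -/
theorem stmt8 (d : ℕ) (hd : 1 ≤ d) :
    (∀ I : TwoSidedIdeal (FreeAlg d), IsHomogIdeal I → (1 : FreeAlg d) ∉ I →
      (XofI I 0 = ⊤ ∧ ∀ m n : ℕ, XofI I (m + n) ≤ prodSpanE (XofI I m) (XofI I n))) ∧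
    (∀ X : (n : ℕ) → Submodule ℂ (EuclideanSpace ℂ (Fin n → Fin d)),
      X 0 = ⊤ → (∀ m n : ℕ, X (m + n) ≤ prodSpanE (X m) (X n)) →
      ∃ J : TwoSidedIdeal (FreeAlg d),
        (∀ p : FreeAlg d, p ∈ J ↔ p ∈ IofX X) ∧ IsHomogIdeal J ∧ (1 : FreeAlg d) ∉ J ∧
        ∀ n : ℕ, XofI J n = X n) ∧
    (∀ I : TwoSidedIdeal (FreeAlg d), IsHomogIdeal I → (1 : FreeAlg d) ∉ I →
      ∀ p : FreeAlg d, p ∈ IofX (XofI I) ↔ p ∈ I) ∧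
    (∀ I J : TwoSidedIdeal (FreeAlg d),
      IsHomogIdeal I → (1 : FreeAlg d) ∉ I → IsHomogIdeal J → (1 : FreeAlg d) ∉ J →
      ((∀ p : FreeAlg d, p ∈ I → p ∈ J) ↔ ∀ n : ℕ, XofI J n ≤ XofI I n)) :=
  stmt8_general d
end
end

section
/- Fix d ≥ 1 and let q and r be two d×d arrays of complex numbers that are admissible with off-diagonal entries different from 1, i.e. for all i ≠ j: q_{ij} ≠ 0, q_{ji} = q_{ij}^{-1}, and q_{ij} ≠ 1, and likewise for r. Let I_q denote the two-sided ideal of ℂ⟨x₁,…,x_d⟩ generated by {x_i x_j − q_{ij} x_j x_i : i ≠ j}, and similarly I_r. For a unitary d×d matrix U = (u_{ij}) let Φ_U be the algebra automorphism of ℂ⟨x₁,…,x_d⟩ determined by Φ_U(x_i) = Σ_j u_{ij} x_j. Then there exists a unitary U with Φ_U(I_q) = I_r if and only if there exists a permutation σ of {1,…,d} such that r_{σ(i)σ(j)} = q_{ij} for all i ≠ j. Moreover, in that case the unitaries U with Φ_U(I_q) = I_r are exactly those of the form u_{ij} = λ_i when j = σ(i) and u_{ij} = 0 otherwise, where |λ_i|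 = 1 for all i and σ is a permutation with r_{σ(i)σ(j)} = q_{ij} for all i ≠ j. -/
/-!
If `Φ_U(I_q) ⊆ I_r`, every relation `x_i x_j - q_ij x_j x_i` is sent into `I_r`, hence killed by
every representation of the `r`-relations. The one-dimensional representation `x_m ↦ δ_mk` gives
`u_ik u_jk (1 - q_ij) = 0`, so distinct rows of `U` have disjoint supports and the unitary `U` is a
scaled permutation matrix `u_ij = λ_i δ_{j,σ i}`. Then `Φ_U` sends the relation for `(i, j)` to a
multiple of `x_k x_l - q_ij x_l x_k` with `k = σ i`, `l = σ j`, and the `2 × 2` representation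
`x_k ↦ diag(r_kl, 1)`, `x_l ↦ E₁₂` shows that this lies in `I_r` only if `q_ij = r_kl`.
Conversely a compatible scaled permutation `U` maps relations to multiples of relations, and so
does `U⋆ = U⁻¹`, which gives the reverse inclusion.
-/

noncomputable section

/-- The generator `x_i` of `ℂ⟨x₁,…,x_d⟩`. -/
def Xg (d : ℕ) (i : Fin d) : FreeAlg d :=
  MonoidAlgebra.of ℂ (FreeMonoid (Fin d)) (FreeMonoid.of i)

/-- Evaluation `p ↦ p(T)`. -/
def evalTuple {d : ℕ} {A : Type*} [Semiring A] [Algebra ℂ A] (T : Fin d → A) :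
    FreeAlg d →ₐ[ℂ] A :=
  MonoidAlgebra.lift ℂ A (FreeMonoid (Fin d)) (FreeMonoid.lift T)

/-- The unitary change of variables `Φ_U` determined by `Φ_U(x_i) = Σ_j u_{ij} x_j`. -/
def PhiU {d : ℕ} (U : Matrix (Fin d) (Fin d) ℂ) : FreeAlg d →ₐ[ℂ] FreeAlg d :=
  evalTuple (fun i => ∑ j : Fin d, U i j • Xg d j)

/-- The `q`-commutation ideal `I_q`, generated by `{x_i x_j − q_{ij} x_j x_i : i ≠ j}`. -/
def qIdeal {d : ℕ} (q : Fin d → Fin d → ℂ) : TwoSidedIdeal (FreeAlg d) :=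
  TwoSidedIdeal.span
    {p | ∃ i j : Fin d, i ≠ j ∧ p = Xg d i * Xg d j - q i j • (Xg d j * Xg d i)}

lemma TwoSidedIdeal.smul_mem {K A : Type*} [CommSemiring K] [Ring A] [Algebra K A]
    (I : TwoSidedIdeal A) (c : K) {p : A} (hp : p ∈ I) : c • p ∈ I := by
  rw [Algebra.smul_def]
  exact I.mul_mem_left _ _ hp

lemma TwoSidedIdeal.smul_mem_iff {K A : Type*} [Field K] [Ring A] [Algebra K A]
    (I : TwoSidedIdeal A) {c : K} (hc : c ≠ 0) {p : A} : c • p ∈ I ↔ p ∈ I := by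
  refine ⟨fun h => ?_, I.smul_mem c⟩
  simpa [smul_smul, inv_mul_cancel₀ hc] using I.smul_mem c⁻¹ h

namespace Matrix

variable {n 𝕜 : Type*} [Fintype n] [DecidableEq n] [RCLike 𝕜] {U : Matrix n n 𝕜}

lemma sum_norm_sq_row_eq_one (hU : U ∈ unitaryGroup n 𝕜) (i : n) :
    ∑ j, ‖U i j‖ ^ 2 = 1 := by
  have h := congrFun (congrFun (mem_unitaryGroup_iff.1 hU) i) i
  simp only [mul_apply, star_apply, RCLike.star_def, RCLike.mul_conj, one_apply_eq] at h
  exact_mod_cast h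

lemma exists_perm_eq_ite_of_mem_unitaryGroup (hU : U ∈ unitaryGroup n 𝕜)
    (h : ∀ i j, i ≠ j → ∀ k, U i k * U j k = 0) :
    ∃ (σ : Equiv.Perm n) (lam : n → 𝕜), (∀ i, ‖lam i‖ = 1) ∧
      ∀ i j, U i j = if j = σ i then lam i else 0 := by
  have row_ne_zero : ∀ i, ∃ j, U i j ≠ 0 := fun i => by
    by_contra! h0
    simpa [h0] using sum_norm_sq_row_eq_one hU i
  choose τ hτ using row_ne_zero
  have col_eq_zero : ∀ i j, i ≠ j → U j (τ i) = 0 := fun i j hij =>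
    (mul_eq_zero.1 (h i j hij (τ i))).resolve_left (hτ i)
  have hτ_inj : Function.Injective τ := fun i j hij => by
    by_contra hne
    exact hτ j (hij ▸ col_eq_zero i j hne)
  let σ := Equiv.ofBijective τ (Finite.injective_iff_bijective.1 hτ_inj)
  have hU_eq : ∀ i j, U i j = if j = σ i then U i (σ i) else 0 := fun i j => by
    split_ifs with hj
    · rw [hj]
    · obtain ⟨i', rfl⟩ := σ.surjective j
      exact col_eq_zero i' i (fun h => hj (h ▸ rfl))
  refine ⟨σ, fun i => U i (σ i), fun i => ?_, hU_eq⟩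
  have h1 := sum_norm_sq_row_eq_one hU i
  rw [Finset.sum_eq_single (σ i) (fun j _ hj => by simp [hU_eq i j, hj]) (by simp)] at h1
  exact (pow_eq_one_iff_of_nonneg (norm_nonneg _) two_ne_zero).1 h1

lemma star_apply_of_eq_ite {m R : Type*} [DecidableEq m] [AddMonoid R] [StarAddMonoid R]
    {U : Matrix m m R} {σ : Equiv.Perm m} {lam : m → R}
    (hU : ∀ i j, U i j = if j = σ i then lam i else 0)
    (i j : m) : star U i j = if j = σ.symm i then star (lam (σ.symm i)) else 0 := by
  rw [star_apply, hU]
  by_cases h : j = σ.symm i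
  · simp [h]
  · simp [h, ← Equiv.symm_apply_eq, Ne.symm h]

end Matrix

lemma Equiv.Perm.permMatrix_mem_unitaryGroup {n R : Type*} [Fintype n] [DecidableEq n]
    [CommRing R] [StarRing R] (σ : Equiv.Perm n) :
    σ.permMatrix R ∈ Matrix.unitaryGroup n R := by
  rw [Matrix.mem_unitaryGroup_iff, Matrix.star_eq_conjTranspose, Matrix.conjTranspose_permMatrix,
    ← Matrix.permMatrix_mul, inv_mul_cancel, Matrix.permMatrix_one]

lemma Equiv.Perm.permMatrix_apply {n R : Type*} [DecidableEq n] [Zero R] [One R]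
    (σ : Equiv.Perm n) (i j : n) : σ.permMatrix R i j = if j = σ i then 1 else 0 := by
  simp [PEquiv.toMatrix_apply, eq_comm]

section

variable {d : ℕ}

@[simp] lemma evalTuple_Xg {A : Type*} [Semiring A] [Algebra ℂ A] (T : Fin d → A) (i : Fin d) :
    evalTuple T (Xg d i) = T i := by
  simp [evalTuple, Xg]

lemma PhiU_Xg (U : Matrix (Fin d) (Fin d) ℂ) (i : Fin d) :
    PhiU U (Xg d i) = ∑ j, U i j • Xg d j :=
  evalTuple_Xg _ i

lemma FreeAlg.algHom_ext {A : Type*} [Semiring A] [Algebra ℂ A] {f g : FreeAlg d →ₐ[ℂ] A}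
    (h : ∀ i, f (Xg d i) = g (Xg d i)) : f = g :=
  MonoidAlgebra.algHom_ext' (FreeMonoid.hom_eq h) (Subsingleton.elim _ _)

lemma evalTuple_comp_PhiU {A : Type*} [Semiring A] [Algebra ℂ A] (T : Fin d → A)
    (U : Matrix (Fin d) (Fin d) ℂ) :
    (evalTuple T).comp (PhiU U) = evalTuple fun i => ∑ j, U i j • T j :=
  FreeAlg.algHom_ext fun i => by simp [PhiU_Xg]

lemma PhiU_mul (U V : Matrix (Fin d) (Fin d) ℂ) : PhiU (U * V) = (PhiU V).comp (PhiU U) := by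
  refine FreeAlg.algHom_ext fun i => ?_
  simp only [AlgHom.comp_apply, PhiU_Xg, map_sum, map_smul, Matrix.mul_apply, Finset.smul_sum,
    smul_smul, Finset.sum_smul]
  exact Finset.sum_comm

lemma PhiU_one : PhiU (1 : Matrix (Fin d) (Fin d) ℂ) = AlgHom.id ℂ (FreeAlg d) :=
  FreeAlg.algHom_ext fun i => by simp [PhiU_Xg, Matrix.one_apply]

lemma image_PhiU_eq_preimage {U : Matrix (Fin d) (Fin d) ℂ}
    (hU : U ∈ Matrix.unitaryGroup (Fin d) ℂ) (s : Set (FreeAlg d)) :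
    ⇑(PhiU U) '' s = ⇑(PhiU (star U)) ⁻¹' s := by
  refine congrFun (Set.image_eq_preimage_of_inverse (fun p => ?_) (fun p => ?_)) s
  · rw [← AlgHom.comp_apply, ← PhiU_mul, Matrix.mem_unitaryGroup_iff.1 hU, PhiU_one,
      AlgHom.id_apply]
  · rw [← AlgHom.comp_apply, ← PhiU_mul, Matrix.mem_unitaryGroup_iff'.1 hU, PhiU_one,
      AlgHom.id_apply]

def qRel (q : Fin d → Fin d → ℂ) (i j : Fin d) : FreeAlg d :=
  Xg d i * Xg d j - q i j • (Xg d j * Xg d i)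

lemma qRel_mem_qIdeal (q : Fin d → Fin d → ℂ) {i j : Fin d} (hij : i ≠ j) :
    qRel q i j ∈ qIdeal q :=
  TwoSidedIdeal.subset_span ⟨i, j, hij, rfl⟩

lemma map_mem_of_mem_qIdeal {R F : Type*} [Ring R] [FunLike F (FreeAlg d) R]
    [RingHomClass F (FreeAlg d) R] (f : F) {q : Fin d → Fin d → ℂ} {I : TwoSidedIdeal R}
    (h : ∀ i j, i ≠ j → f (qRel q i j) ∈ I) {p : FreeAlg d} (hp : p ∈ qIdeal q) : f p ∈ I := by
  suffices qIdeal q ≤ TwoSidedIdeal.comap f I from (TwoSidedIdeal.mem_comap f).1 (this hp)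
  refine TwoSidedIdeal.span_le.2 ?_
  rintro _ ⟨i, j, hij, rfl⟩
  exact (TwoSidedIdeal.mem_comap f).2 (h i j hij)

lemma image_PhiU_subset_iff (U : Matrix (Fin d) (Fin d) ℂ) (q r : Fin d → Fin d → ℂ) :
    ⇑(PhiU U) '' (qIdeal q : Set (FreeAlg d)) ⊆ qIdeal r ↔
      ∀ i j, i ≠ j → PhiU U (qRel q i j) ∈ qIdeal r := by
  refine ⟨fun h i j hij => h ⟨_, qRel_mem_qIdeal q hij, rfl⟩, ?_⟩
  rintro h _ ⟨p, hp, rfl⟩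
  exact map_mem_of_mem_qIdeal (PhiU U) h hp

lemma evalTuple_eq_zero_of_mem_qIdeal {A : Type*} [Ring A] [Algebra ℂ A] {T : Fin d → A}
    {q : Fin d → Fin d → ℂ} (hT : ∀ i j, i ≠ j → T i * T j = q i j • (T j * T i))
    {p : FreeAlg d} (hp : p ∈ qIdeal q) : evalTuple T p = 0 := by
  refine (TwoSidedIdeal.mem_bot A).1 (map_mem_of_mem_qIdeal (evalTuple T) (fun i j hij => ?_) hp)
  simp [qRel, hT i j hij]

lemma evalTuple_qRel {A : Type*} [Ring A] [Algebra ℂ A] (T : Fin d → A)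
    (q : Fin d → Fin d → ℂ) (i j : Fin d) :
    evalTuple T (qRel q i j) = T i * T j - q i j • (T j * T i) := by
  simp [qRel]

lemma mul_eq_zero_of_PhiU_qRel_mem {U : Matrix (Fin d) (Fin d) ℂ} {q r : Fin d → Fin d → ℂ}
    {i j : Fin d} (hq : q i j ≠ 1) (h : PhiU U (qRel q i j) ∈ qIdeal r) (k : Fin d) :
    U i k * U j k = 0 := by
  let T : Fin d → ℂ := fun m => if m = k then 1 else 0
  have hT : ∀ a b, a ≠ b → T a * T b = r a b • (T b * T a) := by
    intro a b hab
    simp only [T]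
    split_ifs <;> simp_all
  have h0 := evalTuple_eq_zero_of_mem_qIdeal hT h
  rw [← AlgHom.comp_apply, evalTuple_comp_PhiU, evalTuple_qRel] at h0
  simp only [T, smul_eq_mul, mul_ite, mul_one, mul_zero, Finset.sum_ite_eq', Finset.mem_univ,
    if_true] at h0
  have : U i k * U j k * (1 - q i j) = 0 := by linear_combination h0
  exact (mul_eq_zero.1 this).resolve_right (sub_ne_zero.2 hq.symm)

lemma Xg_mul_Xg_sub_smul_mem_qIdeal_iff {r : Fin d → Fin d → ℂ} {k l : Fin d} (hkl : k ≠ l)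
    (hr : r k l * r l k = 1) (c : ℂ) :
    Xg d k * Xg d l - c • (Xg d l * Xg d k) ∈ qIdeal r ↔ c = r k l := by
  refine ⟨fun h => ?_, fun hc => hc ▸ qRel_mem_qIdeal r hkl⟩
  let T : Fin d → Matrix (Fin 2) (Fin 2) ℂ :=
    fun m => if m = k then !![r k l, 0; 0, 1] else if m = l then !![0, 1; 0, 0] else 0
  have hT : ∀ a b, a ≠ b → T a * T b = r a b • (T b * T a) := by
    intro a b hab
    simp only [T]
    split_ifs <;> subst_vars <;> ext m n <;> fin_cases m <;> fin_cases n <;> simp_all [mul_comm]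
  have h0 := congrFun (congrFun (evalTuple_eq_zero_of_mem_qIdeal hT h) 0) 1
  simp [T, hkl.symm] at h0
  linear_combination -h0

section ScaledPermutation

variable {U : Matrix (Fin d) (Fin d) ℂ} {σ : Equiv.Perm (Fin d)} {lam : Fin d → ℂ}

lemma PhiU_qRel_of_eq_ite (hU : ∀ i j, U i j = if j = σ i then lam i else 0)
    (q : Fin d → Fin d → ℂ) (i j : Fin d) :
    PhiU U (qRel q i j) =
      (lam i * lam j) • (Xg d (σ i) * Xg d (σ j) - q i j • (Xg d (σ j) * Xg d (σ i))) := by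
  have hX : ∀ i, PhiU U (Xg d i) = lam i • Xg d (σ i) := fun i => by
    simp [PhiU_Xg, hU, ite_smul]
  rw [qRel, map_sub, map_smul, map_mul, map_mul, hX, hX, smul_mul_smul_comm,
    smul_mul_smul_comm, smul_sub, smul_comm (lam i * lam j), mul_comm (lam j)]

lemma image_PhiU_subset_of_eq_ite (hU : ∀ i j, U i j = if j = σ i then lam i else 0)
    {q r : Fin d → Fin d → ℂ} (hσ : ∀ i j, i ≠ j → r (σ i) (σ j) = q i j) :
    ⇑(PhiU U) '' (qIdeal q : Set (FreeAlg d)) ⊆ qIdeal r := by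
  refine (image_PhiU_subset_iff U q r).2 fun i j hij => ?_
  rw [PhiU_qRel_of_eq_ite hU, ← hσ i j hij]
  exact (qIdeal r).smul_mem _ (qRel_mem_qIdeal r (σ.injective.ne hij))

lemma eq_of_PhiU_qRel_mem (hU : ∀ i j, U i j = if j = σ i then lam i else 0)
    (hlam : ∀ i, lam i ≠ 0) {q r : Fin d → Fin d → ℂ} (hr : ∀ k l, k ≠ l → r k l * r l k = 1)
    {i j : Fin d} (hij : i ≠ j) (h : PhiU U (qRel q i j) ∈ qIdeal r) :
    r (σ i) (σ j) = q i j := by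
  rw [PhiU_qRel_of_eq_ite hU, TwoSidedIdeal.smul_mem_iff _ (mul_ne_zero (hlam i) (hlam j)),
    Xg_mul_Xg_sub_smul_mem_qIdeal_iff (σ.injective.ne hij) (hr _ _ (σ.injective.ne hij))] at h
  exact h.symm

end ScaledPermutation

section Classification

variable {q r : Fin d → Fin d → ℂ} {U : Matrix (Fin d) (Fin d) ℂ}

lemma image_PhiU_subset_iff_of_mem_unitaryGroup (hq : ∀ i j, i ≠ j → q i j ≠ 1)
    (hr : ∀ k l, k ≠ l → r k l * r l k = 1) (hU : U ∈ Matrix.unitaryGroup (Fin d) ℂ) :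
    ⇑(PhiU U) '' (qIdeal q : Set (FreeAlg d)) ⊆ qIdeal r ↔
      ∃ (σ : Equiv.Perm (Fin d)) (lam : Fin d → ℂ), (∀ i, ‖lam i‖ = 1) ∧
        (∀ i j, i ≠ j → r (σ i) (σ j) = q i j) ∧ ∀ i j, U i j = if j = σ i then lam i else 0 := by
  refine ⟨fun h => ?_, fun ⟨σ, lam, _, hσ, hUσ⟩ => image_PhiU_subset_of_eq_ite hUσ hσ⟩
  rw [image_PhiU_subset_iff] at h
  obtain ⟨σ, lam, hlam, hUσ⟩ := Matrix.exists_perm_eq_ite_of_mem_unitaryGroup hU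
    fun i j hij => mul_eq_zero_of_PhiU_qRel_mem (hq i j hij) (h i j hij)
  have hlam0 : ∀ i, lam i ≠ 0 := fun i => norm_ne_zero_iff.1 (by simp [hlam i])
  exact ⟨σ, lam, hlam, fun i j hij => eq_of_PhiU_qRel_mem hUσ hlam0 hr hij (h i j hij), hUσ⟩

lemma image_PhiU_eq_iff_of_mem_unitaryGroup (hq : ∀ i j, i ≠ j → q i j ≠ 1)
    (hr : ∀ k l, k ≠ l → r k l * r l k = 1) (hU : U ∈ Matrix.unitaryGroup (Fin d) ℂ) :
    ⇑(PhiU U) '' (qIdeal q : Set (FreeAlg d)) = qIdeal r ↔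
      ∃ (σ : Equiv.Perm (Fin d)) (lam : Fin d → ℂ), (∀ i, ‖lam i‖ = 1) ∧
        (∀ i j, i ≠ j → r (σ i) (σ j) = q i j) ∧ ∀ i j, U i j = if j = σ i then lam i else 0 := by
  rw [← image_PhiU_subset_iff_of_mem_unitaryGroup hq hr hU]
  refine ⟨Eq.subset, fun h => h.antisymm ?_⟩
  obtain ⟨σ, lam, -, hσ, hUσ⟩ := (image_PhiU_subset_iff_of_mem_unitaryGroup hq hr hU).1 h
  rw [image_PhiU_eq_preimage hU, ← Set.image_subset_iff]
  refine image_PhiU_subset_of_eq_ite (Matrix.star_apply_of_eq_ite hUσ) fun k l hkl => ?_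
  rw [← hσ _ _ (σ.symm.injective.ne hkl), Equiv.apply_symm_apply, Equiv.apply_symm_apply]

end Classification

end

theorem stmt12_general (d : ℕ) (q r : Fin d → Fin d → ℂ)
    (hq : ∀ i j : Fin d, i ≠ j → q i j ≠ 0 ∧ q j i = (q i j)⁻¹ ∧ q i j ≠ 1)
    (hr : ∀ i j : Fin d, i ≠ j → r i j ≠ 0 ∧ r j i = (r i j)⁻¹ ∧ r i j ≠ 1) :
    ((∃ U ∈ Matrix.unitaryGroup (Fin d) ℂ,
        ⇑(PhiU U) '' (qIdeal q : Set (FreeAlg d)) = (qIdeal r : Set (FreeAlg d))) ↔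
      ∃ σ : Equiv.Perm (Fin d), ∀ i j : Fin d, i ≠ j → r (σ i) (σ j) = q i j) ∧
    (∀ U ∈ Matrix.unitaryGroup (Fin d) ℂ,
      (⇑(PhiU U) '' (qIdeal q : Set (FreeAlg d)) = (qIdeal r : Set (FreeAlg d)) ↔
        ∃ (σ : Equiv.Perm (Fin d)) (lam : Fin d → ℂ),
          (∀ i, ‖lam i‖ = 1) ∧
          (∀ i j : Fin d, i ≠ j → r (σ i) (σ j) = q i j) ∧
          (∀ i j : Fin d, U i j = if j = σ i then lam i else 0))) := by
  have hr_inv : ∀ k l, k ≠ l → r k l * r l k = 1 := fun k l hkl => by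
    rw [(hr k l hkl).2.1, mul_inv_cancel₀ (hr k l hkl).1]
  have classify := fun U (hU : U ∈ Matrix.unitaryGroup (Fin d) ℂ) =>
    image_PhiU_eq_iff_of_mem_unitaryGroup (fun i j hij => (hq i j hij).2.2) hr_inv hU
  refine ⟨⟨?_, ?_⟩, classify⟩
  · rintro ⟨U, hU, h⟩
    obtain ⟨σ, -, -, hσ, -⟩ := (classify U hU).1 h
    exact ⟨σ, hσ⟩
  · rintro ⟨σ, hσ⟩
    have hσU := σ.permMatrix_mem_unitaryGroup (R := ℂ)
    exact ⟨_, hσU, (classify _ hσU).2 ⟨σ, 1, by simp, hσ, σ.permMatrix_apply⟩⟩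

/-- **Classification of the `q`-commuting subproduct systems** (via the correspondence
between homogeneous ideals and subproduct systems): for admissible matrices `q, r` with
off-diagonal entries `≠ 1`, a unitary change of variables maps `I_q` onto `I_r` iff
`r = U_σ q U_σ⁻¹` for a permutation `σ`; and the unitaries achieving this are exactly the
scaled permutation matrices compatible with `q` and `r`. -/
theorem stmt12 (d : ℕ) (hd : 1 ≤ d) (q r : Fin d → Fin d → ℂ)
    (hq : ∀ i j : Fin d, i ≠ j → q i j ≠ 0 ∧ q j i = (q i j)⁻¹ ∧ q i j ≠ 1)
    (hr : ∀ i j : Fin d, i ≠ j → r i j ≠ 0 ∧ r j i = (r i j)⁻¹ ∧ r i j ≠ 1) :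
    ((∃ U ∈ Matrix.unitaryGroup (Fin d) ℂ,
        ⇑(PhiU U) '' (qIdeal q : Set (FreeAlg d)) = (qIdeal r : Set (FreeAlg d))) ↔
      ∃ σ : Equiv.Perm (Fin d), ∀ i j : Fin d, i ≠ j → r (σ i) (σ j) = q i j) ∧
    (∀ U ∈ Matrix.unitaryGroup (Fin d) ℂ,
      (⇑(PhiU U) '' (qIdeal q : Set (FreeAlg d)) = (qIdeal r : Set (FreeAlg d)) ↔
        ∃ (σ : Equiv.Perm (Fin d)) (lam : Fin d → ℂ),
          (∀ i, ‖lam i‖ = 1) ∧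
          (∀ i j : Fin d, i ≠ j → r (σ i) (σ j) = q i j) ∧
          (∀ i j : Fin d, U i j = if j = σ i then lam i else 0))) :=
  stmt12_general d q r hq hr
end
end

section
/- Let A be a 2×2 complex matrix whose symmetric part Aˢ := (A + Aᵀ)/2 has rank 1. Then there exists exactly one real number q ≥ 0 for which there exist λ ∈ ℂ and a 2×2 unitary matrix U such that the matrix with rows (1, q) and (−q, 0) equals λ Uᵀ A U. Furthermore, if A is not symmetric, then there exists an invertible 2×2 complex matrix T with Tᵀ A T equal to the matrix with rows (1, 1) and (−1, 0). -/
/-!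
Over ℂ a symmetric rank-one `2×2` matrix is `v vᵀ` with `v ≠ 0`, so
`A = v vᵀ + c J` with `J = !![0, 1; -1, 0]`. Congruence by `T` acts as
`Tᵀ (v vᵀ + c J) T = w wᵀ + c (det T) J` with `w = Tᵀ v`. If `T = U` is unitary then
`‖w‖ = ‖v‖` and `|det U| = 1`, so matching `λ (w wᵀ + c (det U) J)` with `!![1, q; -q, 0]`
forces `w = (w₀, 0)`, `|λ| ‖v‖² = 1` and `q = |c| / ‖v‖²`; a unitary `U` with
`Uᵀ v = ‖v‖ e₀` and a suitable phase of `det U` attains this value. Dropping unitarity, one can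
take `Tᵀ v = e₀` and `det T = 1 / c`, where `c ≠ 0` exactly when `A` is not symmetric.
-/

open Matrix ComplexConjugate

section Congruence

variable {R : Type*} [CommRing R]

theorem transpose_mul_skew_mul (T : Matrix (Fin 2) (Fin 2) R) :
    Tᵀ * !![0, 1; -1, 0] * T = T.det • !![0, 1; -1, 0] := by
  ext i j
  fin_cases i <;> fin_cases j <;> simp [mul_apply, Fin.sum_univ_two, det_fin_two] <;> ring

theorem transpose_mul_vecMulVec_self_mul {n : Type*} [Fintype n] (T : Matrix n n R) (v : n → R) :
    Tᵀ * vecMulVec v v * T = vecMulVec (Tᵀ *ᵥ v) (Tᵀ *ᵥ v) := by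
  rw [mul_vecMulVec, vecMulVec_mul, ← mulVec_transpose]

theorem transpose_mul_vecMulVec_add_smul_skew_mul (T : Matrix (Fin 2) (Fin 2) R) (v : Fin 2 → R)
    (c : R) :
    Tᵀ * (vecMulVec v v + c • !![0, 1; -1, 0]) * T =
      vecMulVec (Tᵀ *ᵥ v) (Tᵀ *ᵥ v) + (c * T.det) • !![0, 1; -1, 0] := by
  rw [Matrix.mul_add, Matrix.add_mul, transpose_mul_vecMulVec_self_mul, Matrix.mul_smul,
    Matrix.smul_mul, transpose_mul_skew_mul, smul_smul]

theorem vecMulVec_add_smul_skew (w : Fin 2 → R) (t : R) :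
    vecMulVec w w + t • !![0, 1; -1, 0] = !![w 0 ^ 2, w 0 * w 1 + t; w 0 * w 1 - t, w 1 ^ 2] := by
  ext i j
  fin_cases i <;> fin_cases j <;> simp [vecMulVec_apply, sq, sub_eq_add_neg, mul_comm]

end Congruence

theorem exists_eq_vecMulVec_of_isSymm_of_det_eq_zero {K : Type*} [Field K] [IsAlgClosed K]
    {S : Matrix (Fin 2) (Fin 2) K} (hS : S.IsSymm) (hdet : S.det = 0) :
    ∃ v : Fin 2 → K, S = vecMulVec v v := by
  obtain ⟨a, ha⟩ := IsAlgClosed.exists_pow_nat_eq (S 0 0) two_pos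
  obtain ⟨b, hb⟩ := IsAlgClosed.exists_pow_nat_eq (S 1 1) two_pos
  have h10 : S 1 0 = S 0 1 := hS.apply 0 1
  have hab : (a * b) ^ 2 = S 0 1 ^ 2 := by
    rw [det_fin_two, h10] at hdet
    linear_combination hdet + a ^ 2 * hb + S 1 1 * ha
  obtain ⟨b', hb', hab'⟩ : ∃ b', b' ^ 2 = S 1 1 ∧ a * b' = S 0 1 := by
    rcases sq_eq_sq_iff_eq_or_eq_neg.mp hab with h | h
    · exact ⟨b, hb, h⟩
    · exact ⟨-b, by rw [neg_sq, hb], by rw [mul_neg, h, neg_neg]⟩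
  refine ⟨![a, b'], ?_⟩
  ext i j
  fin_cases i <;> fin_cases j <;> simp [vecMulVec_apply, ← sq, ha, hb', hab', h10, mul_comm b' a]

theorem exists_eq_vecMulVec_add_smul_skew {K : Type*} [Field K] [IsAlgClosed K] [NeZero (2 : K)]
    (A : Matrix (Fin 2) (Fin 2) K) (hA : ((1 / 2 : K) • (A + Aᵀ)).rank = 1) :
    ∃ v ≠ 0, ∃ c : K, A = vecMulVec v v + c • !![0, 1; -1, 0] := by
  set S := (1 / 2 : K) • (A + Aᵀ) with hS
  have hS0 : S ≠ 0 := by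
    rintro h
    simp [h] at hA
  have hdet : S.det = 0 := by
    by_contra h
    have := rank_of_isUnit S ((isUnit_iff_isUnit_det S).mpr (Ne.isUnit h))
    simp [hA] at this
  have hsymm : S.IsSymm := by
    rw [IsSymm, hS, transpose_smul, transpose_add, transpose_transpose, add_comm]
  obtain ⟨v, hv⟩ := exists_eq_vecMulVec_of_isSymm_of_det_eq_zero hsymm hdet
  refine ⟨v, ?_, (A 0 1 - A 1 0) / 2, ?_⟩
  · rintro rfl
    exact hS0 (by simpa using hv)
  · rw [← hv]
    ext i j
    fin_cases i <;> fin_cases j <;> simp [hS] <;> field_simp <;> ring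

theorem star_dotProduct_self_fin_two (x : Fin 2 → ℂ) :
    star x ⬝ᵥ x = ((‖x 0‖ ^ 2 + ‖x 1‖ ^ 2 : ℝ) : ℂ) := by
  simp [dotProduct, Fin.sum_univ_two, Complex.conj_mul']

theorem sq_norm_add_sq_norm_pos {v : Fin 2 → ℂ} (hv : v ≠ 0) : 0 < ‖v 0‖ ^ 2 + ‖v 1‖ ^ 2 := by
  have : ¬ (v 0 = 0 ∧ v 1 = 0) := fun h => hv (by ext i; fin_cases i <;> simp [h])
  rcases not_and_or.mp this with h | h <;> positivity

theorem star_mulVec_dotProduct_mulVec_of_mem_unitaryGroup {α n : Type*} [CommRing α] [StarRing α]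
    [Fintype n] [DecidableEq n] {U : Matrix n n α} (hU : U ∈ unitaryGroup n α) (v : n → α) :
    star (U *ᵥ v) ⬝ᵥ (U *ᵥ v) = star v ⬝ᵥ v := by
  rw [star_mulVec, ← dotProduct_mulVec, mulVec_mulVec, ← star_eq_conjTranspose,
    (mem_unitaryGroup_iff'.mp hU), one_mulVec]

theorem eq_div_of_normalForm_eq_smul_transpose_mul_mul {v : Fin 2 → ℂ} {c : ℂ} {q : ℝ}
    (hq : 0 ≤ q) {lam : ℂ} {U : Matrix (Fin 2) (Fin 2) ℂ} (hU : U ∈ unitaryGroup (Fin 2) ℂ)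
    (h : !![1, (q : ℂ); -q, 0] = lam • (Uᵀ * (vecMulVec v v + c • !![0, 1; -1, 0]) * U)) :
    q = ‖c‖ / (‖v 0‖ ^ 2 + ‖v 1‖ ^ 2) := by
  rw [transpose_mul_vecMulVec_add_smul_skew_mul, vecMulVec_add_smul_skew] at h
  generalize hw : Uᵀ *ᵥ v = w at h
  have h00 : 1 = lam * w 0 ^ 2 := by simpa using congrFun₂ h 0 0
  have h01 : (q : ℂ) = lam * (w 0 * w 1 + c * U.det) := by simpa using congrFun₂ h 0 1
  have h11 : 0 = lam * w 1 ^ 2 := by simpa using congrFun₂ h 1 1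
  have hlam : lam ≠ 0 := by rintro rfl; simp at h00
  have hw1 : w 1 = 0 := by simpa [hlam] using h11.symm
  have hw0 : ‖w 0‖ ^ 2 = ‖v 0‖ ^ 2 + ‖v 1‖ ^ 2 := by
    have := star_mulVec_dotProduct_mulVec_of_mem_unitaryGroup
      (transpose_mem_unitaryGroup_iff.mpr hU) v
    rw [hw, star_dotProduct_self_fin_two, star_dotProduct_self_fin_two, hw1] at this
    simpa using Complex.ofReal_injective this
  have hlam_norm : ‖lam‖ * ‖w 0‖ ^ 2 = 1 := by simpa using (congrArg norm h00).symm
  have hdet : ‖U.det‖ = 1 := CStarRing.norm_of_mem_unitary (det_of_mem_unitary hU)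
  have hq_norm : q = ‖lam‖ * ‖c‖ := by
    simpa [hw1, hdet, abs_of_nonneg hq] using congrArg norm h01
  rw [← hw0, hq_norm, eq_div_iff (by rintro h; simp [h] at hlam_norm)]
  linear_combination ‖c‖ * hlam_norm

theorem exists_mul_eq_norm (c : ℂ) : ∃ e : ℂ, ‖e‖ = 1 ∧ c * e = ‖c‖ := by
  rcases eq_or_ne c 0 with rfl | hc
  · exact ⟨1, by simp⟩
  · refine ⟨‖c‖ / c, by simp [hc], by field_simp⟩

theorem exists_mem_unitaryGroup_transpose_mulVec_eq {v : Fin 2 → ℂ} (hv : v ≠ 0) {e : ℂ}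
    (he : ‖e‖ = 1) :
    ∃ U ∈ unitaryGroup (Fin 2) ℂ,
      Uᵀ *ᵥ v = ![(√(‖v 0‖ ^ 2 + ‖v 1‖ ^ 2) : ℂ), 0] ∧ U.det = e := by
  set s := ‖v 0‖ ^ 2 + ‖v 1‖ ^ 2 with hs
  set n : ℂ := ((√s : ℝ) : ℂ) with hn
  have hs0 : 0 < s := sq_norm_add_sq_norm_pos hv
  have hn0 : n ≠ 0 := by simpa [hn] using Real.sqrt_ne_zero'.mpr hs0
  have hnc : conj n = n := Complex.conj_ofReal _
  have hn2 : n ^ 2 = s := by rw [← Complex.ofReal_pow, Real.sq_sqrt hs0.le]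
  have hee : conj e * e = 1 := by rw [Complex.conj_mul', he]; simp
  have hnv : conj (v 0) * v 0 + conj (v 1) * v 1 = n ^ 2 := by
    rw [hn2, Complex.conj_mul', Complex.conj_mul']; push_cast [hs]; ring
  -- the columns `conj v / n` and `e • (-v 1, v 0) / n` are orthonormal
  refine ⟨n⁻¹ • !![conj (v 0), -(v 1 * e); conj (v 1), v 0 * e], ?_, ?_, ?_⟩
  · rw [mem_unitaryGroup_iff']
    ext i j
    fin_cases i <;> fin_cases j <;>
      simp [mul_apply, Fin.sum_univ_two, star_eq_conjTranspose, hnc] <;> field_simp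
    · linear_combination hnv
    · ring
    · ring
    · linear_combination (conj (v 1) * v 1 + conj (v 0) * v 0) * hee + hnv
  · ext i
    fin_cases i <;> simp [mulVec, dotProduct, Fin.sum_univ_two] <;> field_simp
    · linear_combination hnv
    · ring
  · simp [det_fin_two]
    field_simp
    linear_combination e * hnv

theorem exists_normalForm_eq_smul_transpose_mul_mul {v : Fin 2 → ℂ} (hv : v ≠ 0) (c : ℂ) :
    ∃ (lam : ℂ) (U : Matrix (Fin 2) (Fin 2) ℂ), U ∈ unitaryGroup (Fin 2) ℂ ∧
      !![1, ((‖c‖ / (‖v 0‖ ^ 2 + ‖v 1‖ ^ 2) : ℝ) : ℂ);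
        -((‖c‖ / (‖v 0‖ ^ 2 + ‖v 1‖ ^ 2) : ℝ) : ℂ), 0] =
      lam • (Uᵀ * (vecMulVec v v + c • !![0, 1; -1, 0]) * U) := by
  obtain ⟨e, he, hce⟩ := exists_mul_eq_norm c
  obtain ⟨U, hU, hUv, hUdet⟩ := exists_mem_unitaryGroup_transpose_mulVec_eq hv he
  set s := ‖v 0‖ ^ 2 + ‖v 1‖ ^ 2
  have hs0 : (s : ℂ) ≠ 0 := Complex.ofReal_ne_zero.mpr (sq_norm_add_sq_norm_pos hv).ne'
  have hn2 : ((√s : ℝ) : ℂ) ^ 2 = s := by rw [← Complex.ofReal_pow, Real.sq_sqrt (by positivity)]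
  refine ⟨(s : ℂ)⁻¹, U, hU, ?_⟩
  rw [transpose_mul_vecMulVec_add_smul_skew_mul, vecMulVec_add_smul_skew, hUv, hUdet, hce]
  ext i j
  fin_cases i <;> fin_cases j <;> simp [hn2, hs0] <;> field_simp

theorem exists_transpose_mulVec_eq_and_det_eq {K : Type*} [Field K] {v : Fin 2 → K} (hv : v ≠ 0)
    (d : K) : ∃ T : Matrix (Fin 2) (Fin 2) K, Tᵀ *ᵥ v = ![1, 0] ∧ T.det = d := by
  by_cases h0 : v 0 = 0
  · have h1 : v 1 ≠ 0 := fun h1 => hv (by ext i; fin_cases i <;> simp [h0, h1])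
    refine ⟨!![0, -(v 1 * d); (v 1)⁻¹, 0], ?_, ?_⟩
    · ext i; fin_cases i <;> simp [mulVec, dotProduct, Fin.sum_univ_two, h0, h1]
    · simp [det_fin_two]
      field_simp
  · refine ⟨!![(v 0)⁻¹, -(v 1 * d); 0, v 0 * d], ?_, ?_⟩
    · ext i
      fin_cases i <;> simp [mulVec, dotProduct, Fin.sum_univ_two, h0]
      ring
    · simp [det_fin_two, h0]

/-- **Normal form under unitary congruence for `2×2` matrices with rank-one symmetric
part**: there is exactly one `q ≥ 0` such that `A` is unitarily congruent, up to a scalar,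
to `!![1, q; -q, 0]`; and if `A` is not symmetric, it is congruent to `!![1, 1; -1, 0]`. -/
theorem stmt15 (A : Matrix (Fin 2) (Fin 2) ℂ)
    (hA : (((1 : ℂ) / 2) • (A + Aᵀ)).rank = 1) :
    (∃! qq : ℝ, 0 ≤ qq ∧ ∃ (lam : ℂ) (U : Matrix (Fin 2) (Fin 2) ℂ),
        U ∈ Matrix.unitaryGroup (Fin 2) ℂ ∧
        !![(1 : ℂ), (qq : ℂ); -(qq : ℂ), 0] = lam • (Uᵀ * A * U)) ∧
    (Aᵀ ≠ A → ∃ T : Matrix (Fin 2) (Fin 2) ℂ, IsUnit T ∧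
        Tᵀ * A * T = !![(1 : ℂ), 1; -1, 0]) := by
  obtain ⟨v, hv, c, rfl⟩ := exists_eq_vecMulVec_add_smul_skew A hA
  refine ⟨⟨_, ⟨by positivity, exists_normalForm_eq_smul_transpose_mul_mul hv c⟩,
    fun q ⟨hq, _, _, hU, h⟩ => eq_div_of_normalForm_eq_smul_transpose_mul_mul hq hU h⟩, ?_⟩
  intro hnonsymm
  have hc : c ≠ 0 := by
    rintro rfl
    simp [transpose_vecMulVec] at hnonsymm
  obtain ⟨T, hTv, hTdet⟩ := exists_transpose_mulVec_eq_and_det_eq hv c⁻¹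
  refine ⟨T, (isUnit_iff_isUnit_det T).mpr (by simp [hTdet, hc]), ?_⟩
  rw [transpose_mul_vecMulVec_add_smul_skew_mul, vecMulVec_add_smul_skew, hTv, hTdet,
    mul_inv_cancel₀ hc]
  simp
end
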